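/- arXiv:1701.08446 — 14 statements merged into one kernel-verified Lean document; each statement's English description precedes it below -/
import Mathlib

section
/- For every real number x with 0 < |x| < π, one has ((π² − x²)/π²)^(π²/6) ≤ (sin x)/x ≤ (π² − x²)/π². -/
/-! Euler's product `sin (π z) / (π z) = ∏ (1 - z² / n²)` has factors in `[0, 1]` when `z² ≤ 1`,
so every partial product with at least one factor is at most its first factor `1 - z²`.
For the lower bound, Bernoulli's inequality `(1 - t) ^ a ≤ 1 - a t` (for `0 ≤ a ≤ 1`) applied with
`a = 1 / n²` and `t = z²` bounds each factor below by `(1 - z²) ^ (1 / n²)`; multiplying and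
letting the exponents add up to `ζ(2) = π² / 6` gives `(1 - z²) ^ (π² / 6)`. -/

open Real Filter Finset Topology

lemma rpow_sum_le_prod_one_sub_mul {ι : Type*} (s : Finset ι) {a : ι → ℝ}
    (ha0 : ∀ i ∈ s, 0 ≤ a i) (ha1 : ∀ i ∈ s, a i ≤ 1) {t : ℝ} (ht : t ≤ 1) :
    (1 - t) ^ (∑ i ∈ s, a i) ≤ ∏ i ∈ s, (1 - a i * t) := by
  rw [rpow_sum_of_nonneg (sub_nonneg.2 ht) ha0]
  refine prod_le_prod (fun i _ => rpow_nonneg (sub_nonneg.2 ht) _) fun i hi => ?_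
  simpa [sub_eq_add_neg] using
    rpow_one_add_le_one_add_mul_self (s := -t) (by linarith) (ha0 i hi) (ha1 i hi)

lemma prod_le_of_mem_of_le_one {ι R : Type*} [CommSemiring R] [PartialOrder R] [IsOrderedRing R]
    {s : Finset ι} {f : ι → R} (h0 : ∀ i ∈ s, 0 ≤ f i) (h1 : ∀ i ∈ s, f i ≤ 1) {j : ι}
    (hj : j ∈ s) : ∏ i ∈ s, f i ≤ f j := by
  classical
  rw [← mul_prod_erase s f hj]
  exact mul_le_of_le_one_right (h0 j hj)
    (prod_le_one (fun i hi => h0 i (mem_of_mem_erase hi)) fun i hi => h1 i (mem_of_mem_erase hi))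

lemma hasSum_one_div_nat_add_one_sq :
    HasSum (fun n : ℕ => 1 / ((n : ℝ) + 1) ^ 2) (π ^ 2 / 6) := by
  have h := (hasSum_nat_add_iff (f := fun n : ℕ => 1 / (n : ℝ) ^ 2) 1).2
    (by simpa using hasSum_zeta_two)
  exact_mod_cast h

lemma tendsto_prod_one_sub_sq_div_sq {z : ℝ} (hz : z ≠ 0) :
    Tendsto (fun n : ℕ => ∏ j ∈ range n, (1 - z ^ 2 / ((j : ℝ) + 1) ^ 2)) atTop
      (𝓝 (sin (π * z) / (π * z))) := by
  have hπz : π * z ≠ 0 := mul_ne_zero pi_ne_zero hz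
  simpa [mul_div_cancel_left₀ _ hπz] using (tendsto_euler_sin_prod z).div_const (π * z)

lemma one_sub_sq_rpow_le_sin_pi_mul_div {z : ℝ} (hz0 : z ≠ 0) (hz1 : z ^ 2 ≤ 1) :
    (1 - z ^ 2) ^ (π ^ 2 / 6) ≤ sin (π * z) / (π * z) := by
  have hexp : Tendsto (fun n : ℕ => (1 - z ^ 2) ^ ∑ j ∈ range n, 1 / ((j : ℝ) + 1) ^ 2) atTop
      (𝓝 ((1 - z ^ 2) ^ (π ^ 2 / 6))) :=
    tendsto_const_nhds.rpow hasSum_one_div_nat_add_one_sq.tendsto_sum_nat (Or.inr (by positivity))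
  refine le_of_tendsto_of_tendsto' hexp (tendsto_prod_one_sub_sq_div_sq hz0) fun n => ?_
  simpa only [one_div_mul_eq_div] using rpow_sum_le_prod_one_sub_mul (range n)
    (a := fun j : ℕ => 1 / ((j : ℝ) + 1) ^ 2)
    (fun j _ => by positivity)
    (fun j _ => div_le_one_of_le₀ (one_le_pow₀ (by simp)) (by positivity)) hz1

lemma sin_pi_mul_div_le_one_sub_sq {z : ℝ} (hz0 : z ≠ 0) (hz1 : z ^ 2 ≤ 1) :
    sin (π * z) / (π * z) ≤ 1 - z ^ 2 := by
  have hfactor : ∀ j : ℕ, z ^ 2 / ((j : ℝ) + 1) ^ 2 ≤ z ^ 2 := fun j =>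
    div_le_self (sq_nonneg z) (one_le_pow₀ (by simp))
  refine le_of_tendsto (tendsto_prod_one_sub_sq_div_sq hz0) ?_
  filter_upwards [eventually_ge_atTop 1] with n hn
  refine (prod_le_of_mem_of_le_one (fun j _ => sub_nonneg.2 ((hfactor j).trans hz1))
    (fun j _ => sub_le_self _ (by positivity)) (mem_range.2 hn)).trans_eq ?_
  simp

theorem stmt_0 (x : ℝ) (h0 : 0 < |x|) (h1 : |x| < π) :
    ((π ^ 2 - x ^ 2) / π ^ 2) ^ (π ^ 2 / 6) ≤ Real.sin x / x ∧
      Real.sin x / x ≤ (π ^ 2 - x ^ 2) / π ^ 2 := by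
  have hz0 : x / π ≠ 0 := div_ne_zero (abs_pos.1 h0) pi_ne_zero
  have hz1 : (x / π) ^ 2 ≤ 1 := by
    rw [div_pow, div_le_one (by positivity), ← sq_abs]
    exact pow_le_pow_left₀ h0.le h1.le 2
  have hπz : π * (x / π) = x := mul_div_cancel₀ x pi_ne_zero
  have hbase : 1 - (x / π) ^ 2 = (π ^ 2 - x ^ 2) / π ^ 2 := by field_simp
  simpa only [hπz, hbase] using
    And.intro (one_sub_sq_rpow_le_sin_pi_mul_div hz0 hz1) (sin_pi_mul_div_le_one_sub_sq hz0 hz1)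
end

section
/- For every real number x with |x| < π/2, one has ((π² − 4x²)/π²)^(π²/8) ≤ cos x ≤ (π² − 4x²)/π². -/
/-!
Take logarithms. Since both sides agree at `0`, comparing logarithmic derivatives on `[0, x]`
reduces the two bounds to
`8 t cos t ≤ (π² - 4t²) sin t` and `(π² - 4t²) sin t ≤ π² t cos t` on `[0, π/2]`.
In each case the difference vanishes at `0` and at `π/2`, and its derivative changes sign at
most once, from `+` to `-` (for the second one because `tan t / t` is increasing), so the
difference is nonnegative.
-/

open Real Set

theorem nonneg_of_deriv_sign_change {f f' : ℝ → ℝ} {a b x : ℝ}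
    (hf : ContinuousOn f (Icc a b)) (hderiv : ∀ t ∈ Ioo a b, HasDerivAt f (f' t) t)
    (hsign : ∀ s ∈ Ioo a b, ∀ t ∈ Ioo a b, s < t → f' s < 0 → f' t ≤ 0)
    (ha : 0 ≤ f a) (hb : 0 ≤ f b) (hx : x ∈ Icc a b) : 0 ≤ f x := by
  by_cases hinc : ∀ s ∈ Ioo a x, 0 ≤ f' s
  · have hmono : MonotoneOn f (Icc a x) :=
      monotoneOn_of_hasDerivWithinAt_nonneg (convex_Icc a x)
        (hf.mono (Icc_subset_Icc_right hx.2))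
        (fun t ht =>
          (hderiv t (Ioo_subset_Ioo_right hx.2 (interior_Icc.subset ht))).hasDerivWithinAt)
        (fun t ht => hinc t (interior_Icc.subset ht))
    exact ha.trans (hmono (left_mem_Icc.2 hx.1) (right_mem_Icc.2 hx.1) hx.1)
  · push Not at hinc
    obtain ⟨s, hs, hs_neg⟩ := hinc
    have hanti : AntitoneOn f (Icc x b) :=
      antitoneOn_of_hasDerivWithinAt_nonpos (convex_Icc x b)
        (hf.mono (Icc_subset_Icc_left hx.1))
        (fun t ht =>
          (hderiv t (Ioo_subset_Ioo_left hx.1 (interior_Icc.subset ht))).hasDerivWithinAt)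
        (fun t ht => by
          rw [interior_Icc] at ht
          exact hsign s ⟨hs.1, hs.2.trans_le hx.2⟩ t ⟨hx.1.trans_lt ht.1, ht.2⟩
            (hs.2.trans ht.1) hs_neg)
    exact hb.trans (hanti (left_mem_Icc.2 hx.2) (right_mem_Icc.2 hx.2) hx.2)

theorem le_of_hasDerivAt_le {f g f' g' : ℝ → ℝ} {a b : ℝ} (hab : a ≤ b)
    (hf : ∀ t ∈ Icc a b, HasDerivAt f (f' t) t) (hg : ∀ t ∈ Icc a b, HasDerivAt g (g' t) t)
    (ha : f a ≤ g a) (hle : ∀ t ∈ Icc a b, f' t ≤ g' t) : f b ≤ g b :=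
  image_le_of_deriv_right_le_deriv_boundary
    (fun t ht => (hf t ht).continuousAt.continuousWithinAt)
    (fun t ht => (hf t (Ico_subset_Icc_self ht)).hasDerivWithinAt) ha
    (fun t ht => (hg t ht).continuousAt.continuousWithinAt)
    (fun t ht => (hg t (Ico_subset_Icc_self ht)).hasDerivWithinAt)
    (fun t ht => hle t (Ico_subset_Icc_self ht)) (right_mem_Icc.2 hab)

theorem cos_pos_of_nonneg_of_lt_pi_div_two {t : ℝ} (h₀ : 0 ≤ t) (h : t < π / 2) :
    0 < cos t :=
  cos_pos_of_mem_Ioo ⟨by linarith [pi_pos], h⟩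

theorem four_mul_sq_lt_pi_sq {t : ℝ} (h₀ : 0 ≤ t) (h : t < π / 2) : 4 * t ^ 2 < π ^ 2 := by
  nlinarith

theorem strictMonoOn_tan_div_self : StrictMonoOn (fun t => tan t / t) (Ioo 0 (π / 2)) := by
  have hcos : ∀ t ∈ Ioo 0 (π / 2), 0 < cos t := fun t ht =>
    cos_pos_of_nonneg_of_lt_pi_div_two ht.1.le ht.2
  refine strictMonoOn_of_hasDerivWithinAt_pos (convex_Ioo _ _)
    (f' := fun t => (1 / cos t ^ 2 * t - tan t * 1) / t ^ 2)
    (fun t ht => ((hasDerivAt_tan (hcos t ht).ne').continuousAt.div continuousAt_id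
      ht.1.ne').continuousWithinAt)
    (fun t ht => by
      rw [interior_Ioo] at ht
      exact ((hasDerivAt_tan (hcos t ht).ne').div (hasDerivAt_id t) ht.1.ne').hasDerivWithinAt)
    (fun t ht => by
      rw [interior_Ioo] at ht
      -- `sin t * cos t = sin (2t) / 2 < t`
      have hsc : sin t * cos t < t := by
        linarith [sin_two_mul t, sin_lt (show 0 < 2 * t by linarith [ht.1])]
      have : 1 / cos t ^ 2 * t - tan t * 1 = (t - sin t * cos t) / cos t ^ 2 := by
        rw [tan_eq_sin_div_cos]; field_simp
      rw [this]
      exact div_pos (div_pos (by linarith) (pow_pos (hcos t ht) 2)) (pow_pos ht.1 2))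

theorem hasDerivAt_pi_sq_sub_four_mul_sq (t : ℝ) :
    HasDerivAt (fun t => π ^ 2 - 4 * t ^ 2) (-(8 * t)) t :=
  (((hasDerivAt_pow 2 t).const_mul 4).const_sub (π ^ 2)).congr_deriv (by push_cast; ring)

theorem hasDerivAt_sub_sq_mul_sin_sub_mul_cos (t : ℝ) :
    HasDerivAt (fun t => (π ^ 2 - 4 * t ^ 2) * sin t - 8 * t * cos t)
      ((π ^ 2 - 8 - 4 * t ^ 2) * cos t) t :=
  (((hasDerivAt_pi_sq_sub_four_mul_sq t).mul (hasDerivAt_sin t)).sub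
    (((hasDerivAt_id' t).const_mul 8).mul (hasDerivAt_cos t))).congr_deriv (by ring)

theorem hasDerivAt_mul_cos_sub_sub_sq_mul_sin (t : ℝ) :
    HasDerivAt (fun t => π ^ 2 * t * cos t - (π ^ 2 - 4 * t ^ 2) * sin t)
      (t * (4 * t * cos t - (π ^ 2 - 8) * sin t)) t :=
  ((((hasDerivAt_id' t).const_mul (π ^ 2)).mul (hasDerivAt_cos t)).sub
    ((hasDerivAt_pi_sq_sub_four_mul_sq t).mul (hasDerivAt_sin t))).congr_deriv (by ring)

theorem eight_mul_mul_cos_le_sub_sq_mul_sin {t : ℝ} (ht : t ∈ Icc 0 (π / 2)) :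
    8 * t * cos t ≤ (π ^ 2 - 4 * t ^ 2) * sin t := by
  rw [← sub_nonneg]
  refine nonneg_of_deriv_sign_change
    (f := fun t => (π ^ 2 - 4 * t ^ 2) * sin t - 8 * t * cos t) (by fun_prop)
    (fun t _ => hasDerivAt_sub_sq_mul_sin_sub_mul_cos t) (fun s hs t ht hst hs_neg => ?_)
    (by simp) (le_of_eq (by simp; ring)) ht
  have hcos_s := cos_pos_of_nonneg_of_lt_pi_div_two hs.1.le hs.2
  have hcos_t := cos_pos_of_nonneg_of_lt_pi_div_two ht.1.le ht.2
  have hs_coeff : π ^ 2 - 8 - 4 * s ^ 2 < 0 := neg_of_mul_neg_left hs_neg hcos_s.le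
  have ht_coeff : π ^ 2 - 8 - 4 * t ^ 2 < 0 := by nlinarith [hs.1]
  exact mul_nonpos_of_nonpos_of_nonneg ht_coeff.le hcos_t.le

theorem sub_sq_mul_sin_le_mul_cos {t : ℝ} (ht : t ∈ Icc 0 (π / 2)) :
    (π ^ 2 - 4 * t ^ 2) * sin t ≤ π ^ 2 * t * cos t := by
  rw [← sub_nonneg]
  refine nonneg_of_deriv_sign_change
    (f := fun t => π ^ 2 * t * cos t - (π ^ 2 - 4 * t ^ 2) * sin t) (by fun_prop)
    (fun t _ => hasDerivAt_mul_cos_sub_sub_sq_mul_sin t)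
    (fun s hs t ht hst hs_neg => ?_) (by simp) (le_of_eq (by simp; ring)) ht
  have h8 : 0 < π ^ 2 - 8 := by nlinarith [pi_gt_three]
  have bracket_neg_iff : ∀ r ∈ Ioo 0 (π / 2),
      4 * r * cos r - (π ^ 2 - 8) * sin r < 0 ↔ 4 / (π ^ 2 - 8) < tan r / r := by
    intro r hr
    have hcos := cos_pos_of_nonneg_of_lt_pi_div_two hr.1.le hr.2
    rw [tan_eq_sin_div_cos, div_div, div_lt_div_iff₀ h8 (mul_pos hcos hr.1), sub_neg]
    constructor <;> intro h <;> linarith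
  have hs_bracket := (bracket_neg_iff s hs).1 (neg_of_mul_neg_right hs_neg hs.1.le)
  have ht_bracket :=
    (bracket_neg_iff t ht).2 (hs_bracket.trans (strictMonoOn_tan_div_self hs ht hst))
  exact mul_nonpos_of_nonneg_of_nonpos ht.1.le ht_bracket.le

theorem hasDerivAt_log_pi_sq_sub_four_mul_sq_div {t : ℝ} (ht : 4 * t ^ 2 < π ^ 2) :
    HasDerivAt (fun t => log ((π ^ 2 - 4 * t ^ 2) / π ^ 2))
      (-(8 * t) / (π ^ 2 - 4 * t ^ 2)) t := by
  have hp : (π ^ 2 - 4 * t ^ 2) / π ^ 2 ≠ 0 := (div_pos (by linarith) (by positivity)).ne'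
  refine (((hasDerivAt_pi_sq_sub_four_mul_sq t).div_const (π ^ 2)).log hp).congr_deriv ?_
  field_simp

theorem cos_le_pi_sq_sub_four_mul_sq_div {x : ℝ} (hx₀ : 0 ≤ x) (hx : x < π / 2) :
    cos x ≤ (π ^ 2 - 4 * x ^ 2) / π ^ 2 := by
  have hcos : ∀ t ∈ Icc 0 x, 0 < cos t := fun t ht =>
    cos_pos_of_nonneg_of_lt_pi_div_two ht.1 (ht.2.trans_lt hx)
  have hsq : ∀ t ∈ Icc 0 x, 4 * t ^ 2 < π ^ 2 := fun t ht =>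
    four_mul_sq_lt_pi_sq ht.1 (ht.2.trans_lt hx)
  rw [← log_le_log_iff (hcos x (right_mem_Icc.2 hx₀))
    (div_pos (by linarith [hsq x (right_mem_Icc.2 hx₀)]) (by positivity))]
  refine le_of_hasDerivAt_le (f := fun t => log (cos t)) hx₀
    (fun t ht => (hasDerivAt_cos t).log (hcos t ht).ne')
    (fun t ht => hasDerivAt_log_pi_sq_sub_four_mul_sq_div (hsq t ht)) (by simp)
    (fun t ht => ?_)
  have hw := eight_mul_mul_cos_le_sub_sq_mul_sin ⟨ht.1, ht.2.trans hx.le⟩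
  rw [neg_div, neg_div, neg_le_neg_iff, div_le_div_iff₀ (by linarith [hsq t ht]) (hcos t ht)]
  linarith

theorem pi_sq_sub_four_mul_sq_div_rpow_le_cos {x : ℝ} (hx₀ : 0 ≤ x) (hx : x < π / 2) :
    ((π ^ 2 - 4 * x ^ 2) / π ^ 2) ^ (π ^ 2 / 8) ≤ cos x := by
  have hcos : ∀ t ∈ Icc 0 x, 0 < cos t := fun t ht =>
    cos_pos_of_nonneg_of_lt_pi_div_two ht.1 (ht.2.trans_lt hx)
  have hsq : ∀ t ∈ Icc 0 x, 4 * t ^ 2 < π ^ 2 := fun t ht =>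
    four_mul_sq_lt_pi_sq ht.1 (ht.2.trans_lt hx)
  have hp : 0 < (π ^ 2 - 4 * x ^ 2) / π ^ 2 :=
    div_pos (by linarith [hsq x (right_mem_Icc.2 hx₀)]) (by positivity)
  rw [← log_le_log_iff (rpow_pos_of_pos hp _) (hcos x (right_mem_Icc.2 hx₀)), log_rpow hp]
  refine le_of_hasDerivAt_le (f := fun t => π ^ 2 / 8 * log ((π ^ 2 - 4 * t ^ 2) / π ^ 2))
    (g := fun t => log (cos t)) hx₀
    (fun t ht => (hasDerivAt_log_pi_sq_sub_four_mul_sq_div (hsq t ht)).const_mul (π ^ 2 / 8))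
    (fun t ht => (hasDerivAt_cos t).log (hcos t ht).ne') (by simp)
    (fun t ht => ?_)
  have hu := sub_sq_mul_sin_le_mul_cos ⟨ht.1, ht.2.trans hx.le⟩
  rw [neg_div, neg_div, mul_neg, neg_le_neg_iff, mul_div_assoc',
    div_le_div_iff₀ (hcos t ht) (by linarith [hsq t ht])]
  linarith

theorem stmt_1 (x : ℝ) (h1 : |x| < π / 2) :
    ((π ^ 2 - 4 * x ^ 2) / π ^ 2) ^ (π ^ 2 / 8) ≤ Real.cos x ∧
      Real.cos x ≤ (π ^ 2 - 4 * x ^ 2) / π ^ 2 := by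
  rw [← cos_abs, ← sq_abs x]
  exact ⟨pi_sq_sub_four_mul_sq_div_rpow_le_cos (abs_nonneg x) h1,
    cos_le_pi_sq_sub_four_mul_sq_div (abs_nonneg x) h1⟩
end

section
/- For every real number x with 0 < |x| < π/2, one has ((π² − 4x²)/π²)^(π²/24) ≤ (sin x)/x. -/
/-!
Euler's product `sin (π y) = π y ∏ (1 - y² / k²)` reduces the claim to bounding each factor
from below. With `u = 4 y²`, Bernoulli's inequality for exponents in `[0, 1]` gives
`(1 - u) ^ (1 / 4k²) ≤ 1 - u / 4k²`, and multiplying these bounds costs the exponent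
`∑ 1 / 4k² ≤ π² / 24`.
-/

open Real Finset Filter

lemma sum_range_one_div_succ_sq_le (N : ℕ) :
    ∑ j ∈ range N, 1 / ((j : ℝ) + 1) ^ 2 ≤ π ^ 2 / 6 := by
  have h := sum_le_hasSum (range (N + 1)) (fun i _ => by positivity) hasSum_zeta_two
  rw [sum_range_succ'] at h
  simpa using h

lemma one_sub_rpow_le_prod_one_sub_mul {ι : Type*} (t : Finset ι) {a : ι → ℝ} {u s : ℝ}
    (hu0 : 0 ≤ u) (hu1 : u < 1) (ha0 : ∀ i ∈ t, 0 ≤ a i) (ha1 : ∀ i ∈ t, a i ≤ 1)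
    (hs : ∑ i ∈ t, a i ≤ s) :
    (1 - u) ^ s ≤ ∏ i ∈ t, (1 - a i * u) := by
  have hbernoulli : ∀ i ∈ t, (1 - u) ^ a i ≤ 1 - a i * u := fun i hi => by
    simpa [sub_eq_add_neg] using
      rpow_one_add_le_one_add_mul_self (s := -u) (by linarith) (ha0 i hi) (ha1 i hi)
  calc (1 - u) ^ s ≤ (1 - u) ^ ∑ i ∈ t, a i :=
        rpow_le_rpow_of_exponent_ge (by linarith) (by linarith) hs
    _ = ∏ i ∈ t, (1 - u) ^ a i := rpow_sum_of_pos (by linarith) _ _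
    _ ≤ ∏ i ∈ t, (1 - a i * u) :=
        prod_le_prod (fun i _ => rpow_nonneg (by linarith) _) hbernoulli

lemma one_sub_four_mul_sq_rpow_le_prod {y : ℝ} (hy : |y| < 1 / 2) (N : ℕ) :
    (1 - 4 * y ^ 2) ^ (π ^ 2 / 24) ≤ ∏ j ∈ range N, (1 - y ^ 2 / ((j : ℝ) + 1) ^ 2) := by
  have hy2 : 4 * y ^ 2 < 1 := by nlinarith [sq_abs y, abs_nonneg y]
  have hsum : ∑ j ∈ range N, 1 / (4 * ((j : ℝ) + 1) ^ 2) ≤ π ^ 2 / 24 := by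
    have := sum_range_one_div_succ_sq_le N
    simp only [one_div, mul_inv, ← mul_sum] at this ⊢
    linarith
  convert one_sub_rpow_le_prod_one_sub_mul (range N) (by positivity) hy2
    (fun j _ => by positivity) (fun j _ => ?_) hsum using 2 with j
  · field_simp
  · rw [div_le_one (by positivity)]
    nlinarith [(j.cast_nonneg : (0 : ℝ) ≤ j)]

lemma pi_mul_mul_rpow_le_sin {y : ℝ} (hy0 : 0 ≤ y) (hy1 : y < 1 / 2) :
    π * y * (1 - 4 * y ^ 2) ^ (π ^ 2 / 24) ≤ sin (π * y) :=
  ge_of_tendsto' (tendsto_euler_sin_prod y) fun N =>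
    mul_le_mul_of_nonneg_left
      (one_sub_four_mul_sq_rpow_le_prod (by rwa [abs_of_nonneg hy0]) N) (by positivity)

theorem stmt_2 (x : ℝ) (h0 : 0 < |x|) (h1 : |x| < π / 2) :
    ((π ^ 2 - 4 * x ^ 2) / π ^ 2) ^ (π ^ 2 / 24) ≤ Real.sin x / x := by
  have hπ := pi_pos
  have hsin := pi_mul_mul_rpow_le_sin (y := |x| / π) (by positivity)
    (by rw [div_lt_iff₀ hπ]; linarith)
  have hbase : (π ^ 2 - 4 * x ^ 2) / π ^ 2 = 1 - 4 * (|x| / π) ^ 2 := by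
    rw [div_pow, sq_abs]; field_simp
  have heven : sin x / x = sin |x| / |x| := by
    rcases abs_choice x with h | h <;> simp [h, neg_div_neg_eq]
  rw [mul_div_cancel₀ _ hπ.ne'] at hsin
  rw [hbase, heven, le_div_iff₀ h0]
  linarith
end

section
/- For every real number x with 0 < |x| < π, one has ((π² − x²)/π²)^(π²/6) ≤ 3·((sin x)/x³ − (cos x)/x²). -/
/-!
Since `(π² - x²)/π² ∈ (0, 1]` and `π²/6 ≥ 1`, the left-hand side is at most `1 - x²/π²`, which is
at most `1 - x²/10` because `π² < 10`. The right-hand side is `3 (sin x - x cos x)/x³`, and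
`sin x - x cos x` has derivative `x sin x ≥ x² - x⁴/6`; integrating from `0` gives
`sin x - x cos x ≥ x³/3 - x⁵/30` for `x ≥ 0`, i.e. the right-hand side is at least `1 - x²/10`.
-/

open Real Set

theorem Real.cube_div_three_sub_pow_five_div_thirty_le_sin_sub_mul_cos {x : ℝ} (hx : 0 ≤ x) :
    x ^ 3 / 3 - x ^ 5 / 30 ≤ sin x - x * cos x := by
  let f : ℝ → ℝ := fun y => sin y - y * cos y - (y ^ 3 / 3 - y ^ 5 / 30)
  have hf : ∀ y, HasDerivAt f (y * (sin y - (y - y ^ 3 / 6))) y := fun y => by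
    have := ((hasDerivAt_sin y).sub ((hasDerivAt_id y).mul (hasDerivAt_cos y))).sub
      (((hasDerivAt_pow 3 y).div_const 3).sub ((hasDerivAt_pow 5 y).div_const 30))
    refine this.congr_deriv ?_
    simp only [id, Nat.cast_ofNat]
    ring
  have hmono : MonotoneOn f (Ici 0) :=
    monotoneOn_of_hasDerivWithinAt_nonneg (convex_Ici 0)
      (fun y _ => (hf y).continuousAt.continuousWithinAt) (fun y _ => (hf y).hasDerivWithinAt)
      fun y hy => by
        rw [interior_Ici, mem_Ioi] at hy
        exact mul_nonneg hy.le (sub_nonneg.mpr (sin_ge_sub_cube hy.le))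
  have := hmono self_mem_Ici hx hx
  simp only [f, sin_zero, cos_zero] at this
  linarith

theorem Real.one_sub_sq_div_ten_le_three_mul_sin_div_cube_sub_cos_div_sq {x : ℝ} (hx : x ≠ 0) :
    1 - x ^ 2 / 10 ≤ 3 * (sin x / x ^ 3 - cos x / x ^ 2) := by
  wlog hpos : 0 < x generalizing x
  · have := this (neg_ne_zero.mpr hx) (neg_pos.mpr (lt_of_le_of_ne (not_lt.mp hpos) hx))
    simpa [sin_neg, cos_neg, Odd.neg_pow (by decide : Odd 3), neg_div_neg_eq] using this
  have key := cube_div_three_sub_pow_five_div_thirty_le_sin_sub_mul_cos hpos.le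
  have hrhs : 3 * (sin x / x ^ 3 - cos x / x ^ 2) = 3 * (sin x - x * cos x) / x ^ 3 := by
    field_simp
  rw [hrhs, le_div_iff₀ (by positivity)]
  linear_combination 3 * key

theorem stmt_3 (x : ℝ) (h0 : 0 < |x|) (h1 : |x| < π) :
    ((π ^ 2 - x ^ 2) / π ^ 2) ^ (π ^ 2 / 6) ≤
      3 * (Real.sin x / x ^ 3 - Real.cos x / x ^ 2) := by
  have hπ : 0 < π ^ 2 := by positivity
  have hπ_sq_lt : π ^ 2 < 10 := by nlinarith [pi_lt_d2, pi_pos]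
  have hx_sq_lt : x ^ 2 < π ^ 2 := by
    simpa only [sq_abs] using pow_lt_pow_left₀ h1 h0.le two_ne_zero
  have hbase : (π ^ 2 - x ^ 2) / π ^ 2 = 1 - x ^ 2 / π ^ 2 := by field_simp
  calc ((π ^ 2 - x ^ 2) / π ^ 2) ^ (π ^ 2 / 6)
      ≤ (π ^ 2 - x ^ 2) / π ^ 2 :=
        rpow_le_self_of_le_one (div_nonneg (by linarith) hπ.le)
          (div_le_one_of_le₀ (by nlinarith) hπ.le) (by nlinarith [pi_gt_three])
    _ ≤ 1 - x ^ 2 / 10 := by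
        rw [hbase]
        gcongr
    _ ≤ 3 * (sin x / x ^ 3 - cos x / x ^ 2) :=
        one_sub_sq_div_ten_le_three_mul_sin_div_cube_sub_cos_div_sq (abs_pos.mp h0)
end

section
/- For every real number x with 0 < |x| < π/2, one has 1 ≤ (sin x)³/(x³ · cos x) ≤ π²/(π² − 4x²). -/
open Real

set_option maxHeartbeats 1000000

lemma aux_sin_lb (x : ℝ) (hx : 0 ≤ x) : x - x ^ 3 / 6 ≤ Real.sin x := by
  have key : ∀ y : ℝ, HasDerivAt (fun z : ℝ => Real.sin z - z + z ^ 3 / 6)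
      (Real.cos y - 1 + (3 : ℕ) * y ^ 2 / 6) y := fun y =>
    ((Real.hasDerivAt_sin y).sub (hasDerivAt_id y)).add ((hasDerivAt_pow 3 y).div_const 6)
  have mono : MonotoneOn (fun z : ℝ => Real.sin z - z + z ^ 3 / 6) (Set.Ici 0) := by
    apply monotoneOn_of_deriv_nonneg (convex_Ici 0)
    · exact ((Real.continuous_sin.sub continuous_id).add
        ((continuous_pow 3).div_const 6)).continuousOn
    · exact fun y _ => ((key y).differentiableAt).differentiableWithinAt
    · intro y hy
      rw [(key y).deriv]
      have := Real.one_sub_sq_div_two_le_cos (x := y)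
      push_cast
      nlinarith
  have h := mono (Set.self_mem_Ici) (Set.mem_Ici.mpr hx) hx
  simp only [Real.sin_zero] at h
  nlinarith [h]

lemma aux_cos_ub (x : ℝ) (h0 : 0 ≤ x) (h2 : x ≤ 2) :
    Real.cos x ≤ 1 - x ^ 2 / 2 + x ^ 4 / 24 := by
  have hs := aux_sin_lb (x / 2) (by linarith)
  have hpos : 0 ≤ x / 2 - (x / 2) ^ 3 / 6 := by
    nlinarith [mul_nonneg (mul_nonneg h0 (sub_nonneg.2 h2)) (by linarith : (0:ℝ) ≤ x + 2)]
  have hc : Real.cos x = 1 - 2 * Real.sin (x / 2) ^ 2 := by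
    have h1 : Real.cos (2 * (x / 2)) = Real.cos (x/2) ^ 2 - Real.sin (x/2) ^ 2 :=
      Real.cos_two_mul' _
    have h2 := Real.sin_sq_add_cos_sq (x / 2)
    rw [show 2 * (x / 2) = x by ring] at h1
    linarith
  nlinarith [mul_self_le_mul_self hpos hs, sq_nonneg (x^3)]

lemma aux_sin_ub (x : ℝ) (h0 : 0 ≤ x) (h2 : x ≤ 2) :
    Real.sin x ≤ x - x ^ 3 / 6 + x ^ 5 / 120 := by
  have key : ∀ y : ℝ, HasDerivAt
      (fun z : ℝ => z - z ^ 3 / 6 + z ^ 5 / 120 - Real.sin z)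
      (1 - (3 : ℕ) * y ^ 2 / 6 + (5 : ℕ) * y ^ 4 / 120 - Real.cos y) y := fun y =>
    (((hasDerivAt_id y).sub ((hasDerivAt_pow 3 y).div_const 6)).add
      ((hasDerivAt_pow 5 y).div_const 120)).sub (Real.hasDerivAt_sin y)
  have mono : MonotoneOn (fun z : ℝ => z - z ^ 3 / 6 + z ^ 5 / 120 - Real.sin z)
      (Set.Icc 0 2) := by
    apply monotoneOn_of_deriv_nonneg (convex_Icc 0 2)
    · exact (((continuous_id.sub ((continuous_pow 3).div_const 6)).add
        ((continuous_pow 5).div_const 120)).sub Real.continuous_sin).continuousOn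
    · exact fun y _ => ((key y).differentiableAt).differentiableWithinAt
    · intro y hy
      rw [interior_Icc] at hy
      rw [(key y).deriv]
      have := aux_cos_ub y hy.1.le hy.2.le
      push_cast
      nlinarith
  have h := mono (Set.mem_Icc.mpr ⟨le_refl 0, by norm_num⟩)
      (Set.mem_Icc.mpr ⟨h0, h2⟩) h0
  simp only [Real.sin_zero] at h
  nlinarith [h]

lemma polyQ (u p2 : ℝ) (h0 : 0 ≤ u) (h1 : u ≤ 1.21) (hp : 9.8696 ≤ p2) (hq : p2 ≤ 9.8697) :
    (p2 - 4*u) * (1 - u/6 + u^2/120)^3 ≤ p2 * (1 - u/2) := by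
  nlinarith [mul_nonneg h0 h0, mul_nonneg (mul_nonneg h0 h0) h0,
    mul_nonneg h0 (sub_nonneg.2 h1), mul_nonneg (mul_nonneg h0 h0) (sub_nonneg.2 h1),
    mul_nonneg (mul_nonneg (mul_nonneg h0 h0) h0) (sub_nonneg.2 h1),
    mul_nonneg (mul_nonneg (mul_nonneg (mul_nonneg h0 h0) h0) h0) (sub_nonneg.2 h1),
    mul_nonneg (mul_nonneg (mul_nonneg (mul_nonneg (mul_nonneg h0 h0) h0) h0) h0) (sub_nonneg.2 h1),
    mul_nonneg (mul_nonneg (mul_nonneg (mul_nonneg (mul_nonneg (mul_nonneg h0 h0) h0) h0) h0) h0) (sub_nonneg.2 h1),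
    mul_nonneg h0 (sub_nonneg.2 hq), mul_nonneg (mul_nonneg h0 h0) (sub_nonneg.2 hq),
    sub_nonneg.2 hp]

lemma polyT (t : ℝ) (h0 : 0 ≤ t) (h1 : t ≤ 0.4709) :
    4*t*(3.141593 - t) ≤ 9.8696 * ((1.5707 - t)^3 * (t - t^3/6)) := by
  nlinarith [mul_nonneg h0 h0, mul_nonneg (mul_nonneg h0 h0) h0,
    mul_nonneg h0 (sub_nonneg.2 h1), mul_nonneg (mul_nonneg h0 h0) (sub_nonneg.2 h1),
    mul_nonneg (mul_nonneg (mul_nonneg h0 h0) h0) (sub_nonneg.2 h1),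
    mul_nonneg (mul_nonneg (mul_nonneg (mul_nonneg h0 h0) h0) h0) (sub_nonneg.2 h1),
    mul_nonneg (mul_nonneg (mul_nonneg (mul_nonneg (mul_nonneg h0 h0) h0) h0) h0) (sub_nonneg.2 h1)]

lemma key_pos (x : ℝ) (hx : 0 < x) (hx2 : x < π / 2) :
    1 ≤ Real.sin x ^ 3 / (x ^ 3 * Real.cos x) ∧
      Real.sin x ^ 3 / (x ^ 3 * Real.cos x) ≤ π ^ 2 / (π ^ 2 - 4 * x ^ 2) := by
  have pi_gt : (3.141592 : ℝ) < π := Real.pi_gt_d6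
  have pi_lt : π < (3.141593 : ℝ) := Real.pi_lt_d6
  have hx16 : x < 1.5708 := by linarith
  have hcpos : 0 < Real.cos x := Real.cos_pos_of_mem_Ioo ⟨by linarith, hx2⟩
  have hspos : 0 < Real.sin x := Real.sin_pos_of_pos_of_lt_pi hx (by linarith)
  have hden : 0 < x ^ 3 * Real.cos x := by positivity
  have hB : 0 < π ^ 2 - 4 * x ^ 2 := by nlinarith
  constructor
  · rw [le_div_iff₀ hden]
    have hlb := aux_sin_lb x hx.le
    have hlbpos : 0 ≤ x - x ^ 3 / 6 := by nlinarith
    have hcub : (x - x ^ 3 / 6) ^ 3 ≤ Real.sin x ^ 3 := pow_le_pow_left₀ hlbpos hlb 3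
    have hcos := aux_cos_ub x hx.le (by linarith)
    have h1 : x ^ 3 * Real.cos x ≤ x ^ 3 * (1 - x ^ 2 / 2 + x ^ 4 / 24) :=
      mul_le_mul_of_nonneg_left hcos (by positivity)
    have h2 : x ^ 3 * (1 - x ^ 2 / 2 + x ^ 4 / 24) ≤ (x - x ^ 3 / 6) ^ 3 := by
      nlinarith [mul_nonneg (pow_nonneg hx.le 7)
        (sub_nonneg.mpr (show x ^ 2 ≤ 9 by nlinarith))]
    linarith
  · rw [div_le_div_iff₀ hden hB]
    rcases le_or_gt x 1.1 with hc | hc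
    · -- small x
      have hub := aux_sin_ub x hx.le (by linarith)
      have hs3 : Real.sin x ^ 3 ≤ (x - x ^ 3 / 6 + x ^ 5 / 120) ^ 3 :=
        pow_le_pow_left₀ hspos.le hub 3
      have hcos : 1 - x ^ 2 / 2 ≤ Real.cos x := Real.one_sub_sq_div_two_le_cos
      have hQ := polyQ (x ^ 2) (π ^ 2) (sq_nonneg x) (by nlinarith) (by nlinarith) (by nlinarith)
      have hQ' := mul_le_mul_of_nonneg_left hQ (by positivity : (0:ℝ) ≤ x ^ 3)
      calc Real.sin x ^ 3 * (π ^ 2 - 4 * x ^ 2)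
          ≤ (x - x ^ 3 / 6 + x ^ 5 / 120) ^ 3 * (π ^ 2 - 4 * x ^ 2) :=
            mul_le_mul_of_nonneg_right hs3 hB.le
        _ ≤ x ^ 3 * (π ^ 2 * (1 - x ^ 2 / 2)) := by nlinarith [hQ']
        _ ≤ π ^ 2 * (x ^ 3 * Real.cos x) := by
            have := mul_le_mul_of_nonneg_left hcos (by positivity : (0:ℝ) ≤ x ^ 3)
            nlinarith [this, sq_nonneg π]
    · -- large x
      obtain ⟨t, hxeq⟩ : ∃ t : ℝ, x = π / 2 - t := ⟨π / 2 - x, by ring⟩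
      have ht0 : 0 < t := by nlinarith [hxeq]
      have ht1 : t ≤ 0.4709 := by nlinarith [hxeq]
      have hcos_eq : Real.cos x = Real.sin t := by
        rw [hxeq, Real.cos_pi_div_two_sub]
      have hclb : t - t ^ 3 / 6 ≤ Real.cos x := by
        rw [hcos_eq]; exact aux_sin_lb t ht0.le
      have hclb0 : 0 ≤ t - t ^ 3 / 6 := by
        nlinarith [mul_nonneg ht0.le (show (0:ℝ) ≤ 6 - t ^ 2 by nlinarith [mul_nonneg ht0.le (sub_nonneg.2 ht1)])]
      have hs1 : Real.sin x ≤ 1 := Real.sin_le_one x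
      have hs3 : Real.sin x ^ 3 ≤ 1 := by
        nlinarith [mul_nonneg (sub_nonneg.2 hs1) (mul_nonneg hspos.le hspos.le),
          mul_nonneg (sub_nonneg.2 hs1) hspos.le]
      have hpt : 0 < π / 2 - t := by linarith [hxeq]
      have hfact : π ^ 2 - 4 * x ^ 2 = 4 * t * (π - t) := by rw [hxeq]; ring
      have hT := polyT t ht0.le ht1
      have hmain : 4 * t * (π - t) ≤ π ^ 2 * ((π / 2 - t) ^ 3 * (t - t ^ 3 / 6)) := by
        have e1 : 4 * t * (π - t) ≤ 4 * t * (3.141593 - t) := by nlinarith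
        have e2 : (9.8696 : ℝ) * ((1.5707 - t)^3 * (t - t^3/6))
            ≤ π ^ 2 * ((π / 2 - t) ^ 3 * (t - t ^ 3 / 6)) := by
          have hpe : (1.5707 : ℝ) - t ≤ π / 2 - t := by linarith
          have hpe0 : (0:ℝ) ≤ 1.5707 - t := by linarith
          have hcube : ((1.5707:ℝ) - t) ^ 3 ≤ (π / 2 - t) ^ 3 := pow_le_pow_left₀ hpe0 hpe 3
          have hp2 : (9.8696 : ℝ) ≤ π ^ 2 := by nlinarith
          have s1 : (1.5707 - t)^3 * (t - t^3/6) ≤ (π/2 - t)^3 * (t - t^3/6) :=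
            mul_le_mul_of_nonneg_right hcube hclb0
          have s2 : (0:ℝ) ≤ (π/2 - t)^3 * (t - t^3/6) :=
            mul_nonneg (pow_nonneg hpt.le 3) hclb0
          nlinarith [mul_nonneg (sub_nonneg.2 hp2) s2,
            mul_le_mul_of_nonneg_left s1 (by norm_num : (0:ℝ) ≤ 9.8696)]
        linarith
      calc Real.sin x ^ 3 * (π ^ 2 - 4 * x ^ 2)
          ≤ 1 * (π ^ 2 - 4 * x ^ 2) := mul_le_mul_of_nonneg_right hs3 hB.le
        _ = 4 * t * (π - t) := by rw [hfact]; ring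
        _ ≤ π ^ 2 * ((π / 2 - t) ^ 3 * (t - t ^ 3 / 6)) := hmain
        _ ≤ π ^ 2 * (x ^ 3 * Real.cos x) := by
            apply mul_le_mul_of_nonneg_left _ (by positivity)
            calc (π / 2 - t) ^ 3 * (t - t ^ 3 / 6)
                ≤ (π / 2 - t) ^ 3 * Real.cos x :=
                  mul_le_mul_of_nonneg_left hclb (pow_nonneg hpt.le 3)
              _ = x ^ 3 * Real.cos x := by rw [← hxeq]

theorem stmt_4 (x : ℝ) (h0 : 0 < |x|) (h1 : |x| < π / 2) :
    1 ≤ Real.sin x ^ 3 / (x ^ 3 * Real.cos x) ∧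
      Real.sin x ^ 3 / (x ^ 3 * Real.cos x) ≤ π ^ 2 / (π ^ 2 - 4 * x ^ 2) := by
  rcases lt_trichotomy x 0 with hneg | hzero | hpos
  · have h := key_pos (-x) (by linarith) (by rwa [abs_of_neg hneg] at h1)
    have e1 : Real.sin (-x) ^ 3 / ((-x) ^ 3 * Real.cos (-x))
        = Real.sin x ^ 3 / (x ^ 3 * Real.cos x) := by
      rw [Real.sin_neg, Real.cos_neg]
      ring_nf
    have e2 : π ^ 2 - 4 * (-x) ^ 2 = π ^ 2 - 4 * x ^ 2 := by ring
    rw [e1, e2] at h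
    exact h
  · simp [hzero] at h0
  · exact key_pos x hpos (by rwa [abs_of_pos hpos] at h1)
end

section
/- For every real number r > 0 and every real number x with 0 < |x| < r, one has 1 ≤ (sinh x)/x ≤ (r²/(r² − x²))^(r²/6). -/
/-!
Both bounds come from the power series `sinh x / x = ∑ x^(2n)/(2n+1)!`: its terms are nonnegative
with constant term `1`, and since `6^n n! ≤ (2n+1)!` it is dominated termwise by the series of
`exp (x²/6)`. Finally `exp s ≤ 1/(1 - s)` for `s = x²/r² ∈ [0, 1)`, raised to the power `r²/6`.
-/

open Real Nat

theorem Nat.six_pow_mul_factorial_le_factorial (k : ℕ) : 6 ^ k * k ! ≤ (2 * k + 1)! := by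
  induction k with
  | zero => simp
  | succ k ih =>
    calc 6 ^ (k + 1) * (k + 1)! = 6 * (k + 1) * (6 ^ k * k !) := by
          rw [pow_succ, factorial_succ]; ring
      _ ≤ (2 * k + 3) * (2 * k + 2) * (2 * k + 1)! := Nat.mul_le_mul (by nlinarith) ih
      _ = (2 * (k + 1) + 1)! := by
          rw [show 2 * (k + 1) + 1 = 2 * k + 1 + 1 + 1 by ring, factorial_succ (2 * k + 1 + 1),
            factorial_succ (2 * k + 1)]
          ring

namespace Real

theorem hasSum_sinh_div_self {x : ℝ} (hx : x ≠ 0) :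
    HasSum (fun n : ℕ ↦ x ^ (2 * n) / (2 * n + 1)!) (sinh x / x) := by
  refine ((hasSum_sinh x).div_const x).congr_fun fun n ↦ ?_
  rw [pow_succ, mul_div_right_comm, mul_div_assoc, div_self hx, mul_one]

theorem one_le_sinh_div_self {x : ℝ} (hx : x ≠ 0) : 1 ≤ sinh x / x := by
  simpa using le_hasSum (hasSum_sinh_div_self hx) 0 fun n _ ↦ by
    rw [pow_mul]; positivity

theorem sinh_div_self_le_exp (x : ℝ) : sinh x / x ≤ exp (x ^ 2 / 6) := by
  rcases eq_or_ne x 0 with rfl | hx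
  · simp
  have hexp : HasSum (fun n : ℕ ↦ (x ^ 2 / 6) ^ n / n !) (exp (x ^ 2 / 6)) := by
    simpa [exp_eq_exp_ℝ] using NormedSpace.expSeries_div_hasSum_exp (x ^ 2 / 6)
  refine hasSum_le (fun n ↦ ?_) (hasSum_sinh_div_self hx) hexp
  rw [div_pow, ← pow_mul, div_div]
  have hfac : ((6 : ℝ) ^ n * n !) ≤ (2 * n + 1)! := by
    exact_mod_cast n.six_pow_mul_factorial_le_factorial
  exact div_le_div_of_nonneg_left (by rw [pow_mul]; positivity) (by positivity) hfac

theorem exp_div_mul_le_rpow {t a c : ℝ} (ht : 0 ≤ t) (hta : t < a) (hc : 0 ≤ c) :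
    exp (t / a * c) ≤ (a / (a - t)) ^ c := by
  have ha : 0 < a := ht.trans_lt hta
  have hexp : exp (t / a) ≤ a / (a - t) := by
    calc exp (t / a) ≤ 1 / (1 - t / a) :=
          exp_bound_div_one_sub_of_interval (by positivity) ((div_lt_one ha).mpr hta)
      _ = a / (a - t) := by field_simp
  rw [exp_mul]
  exact rpow_le_rpow (exp_pos _).le hexp hc

end Real

theorem stmt_5_general (r x : ℝ) (h0 : 0 < |x|) (h1 : |x| < r) :
    1 ≤ Real.sinh x / x ∧
      Real.sinh x / x ≤ (r ^ 2 / (r ^ 2 - x ^ 2)) ^ (r ^ 2 / 6) := by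
  have hx : x ≠ 0 := abs_pos.mp h0
  have hr : r ≠ 0 := (h0.trans h1).ne'
  have hxr : x ^ 2 < r ^ 2 := sq_lt_sq.mpr (h1.trans_le (le_abs_self r))
  refine ⟨one_le_sinh_div_self hx, (sinh_div_self_le_exp x).trans ?_⟩
  rw [show x ^ 2 / 6 = x ^ 2 / r ^ 2 * (r ^ 2 / 6) by field_simp]
  exact exp_div_mul_le_rpow (sq_nonneg x) hxr (by positivity)

theorem stmt_5 (r x : ℝ) (hr : 0 < r) (h0 : 0 < |x|) (h1 : |x| < r) :
    1 ≤ Real.sinh x / x ∧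
      Real.sinh x / x ≤ (r ^ 2 / (r ^ 2 - x ^ 2)) ^ (r ^ 2 / 6) :=
  stmt_5_general r x h0 h1
end

section
/- For every real number r > 0 and every real number x with 0 < |x| < r, one has ((r² − x²)/r²)^(r²/3) ≤ (tanh x)/x ≤ 1. -/
/-!
Since `1 - u ≤ exp (-u)`, the left-hand side is at most `exp (-x² / 3) ≤ 3 / (3 + x²)`. The
remaining bounds `3 / (3 + x²) ≤ tanh x / x ≤ 1` reduce by evenness to `x > 0`, where they are
`sinh x ≤ x cosh x` and `3 x cosh x ≤ (3 + x²) sinh x`; both sides vanish at `0` and the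
differences have derivatives `x sinh x` and `x (x cosh x - sinh x)`, which are nonnegative.
-/

open Real

namespace Real

lemma one_sub_rpow_le_exp_neg_mul {u c : ℝ} (hu : u ≤ 1) (hc : 0 ≤ c) :
    (1 - u) ^ c ≤ exp (-(u * c)) :=
  calc (1 - u) ^ c ≤ exp (-u) ^ c := rpow_le_rpow (by linarith) (one_sub_le_exp_neg u) hc
    _ = exp (-(u * c)) := by rw [← exp_mul, neg_mul]

lemma exp_neg_le_inv_one_add {t : ℝ} (ht : 0 ≤ t) : exp (-t) ≤ (1 + t)⁻¹ := by
  rw [exp_neg]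
  exact inv_anti₀ (by linarith) (by linarith [add_one_le_exp t])

lemma mul_sinh_nonneg (x : ℝ) : 0 ≤ x * sinh x := by
  rcases le_total 0 x with hx | hx
  · exact mul_nonneg hx (sinh_nonneg_iff.mpr hx)
  · exact mul_nonneg_of_nonpos_of_nonpos hx (sinh_nonpos_iff.mpr hx)

lemma monotone_mul_cosh_sub_sinh : Monotone fun x : ℝ => x * cosh x - sinh x := by
  refine monotone_of_hasDerivAt_nonneg (f' := fun x => x * sinh x) (fun x => ?_) mul_sinh_nonneg
  refine (((hasDerivAt_id' x).mul (hasDerivAt_cosh x)).sub (hasDerivAt_sinh x)).congr_deriv ?_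
  ring

lemma sinh_le_mul_cosh {x : ℝ} (hx : 0 ≤ x) : sinh x ≤ x * cosh x := by
  simpa using monotone_mul_cosh_sub_sinh hx

lemma mul_cosh_sub_sinh_nonpos {x : ℝ} (hx : x ≤ 0) : x * cosh x - sinh x ≤ 0 := by
  simpa using monotone_mul_cosh_sub_sinh hx

lemma monotone_sinh_mul_three_add_sq_sub : Monotone fun x : ℝ =>
    sinh x * (3 + x ^ 2) - 3 * x * cosh x := by
  refine monotone_of_hasDerivAt_nonneg (f' := fun x => x * (x * cosh x - sinh x))
    (fun x => ?_) (fun x => ?_)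
  · refine (((hasDerivAt_sinh x).mul ((hasDerivAt_pow 2 x).const_add 3)).sub
      (((hasDerivAt_id' x).const_mul 3).mul (hasDerivAt_cosh x))).congr_deriv ?_
    ring
  · rcases le_total 0 x with hx | hx
    · exact mul_nonneg hx (sub_nonneg.mpr (sinh_le_mul_cosh hx))
    · exact mul_nonneg_of_nonpos_of_nonpos hx (mul_cosh_sub_sinh_nonpos hx)

lemma three_mul_mul_cosh_le {x : ℝ} (hx : 0 ≤ x) : 3 * x * cosh x ≤ sinh x * (3 + x ^ 2) := by
  simpa using monotone_sinh_mul_three_add_sq_sub hx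

lemma tanh_abs_div_abs (x : ℝ) : tanh |x| / |x| = tanh x / x := by
  rcases abs_choice x with h | h <;> simp [h, tanh_neg, neg_div_neg_eq]

lemma tanh_div_self_le_one (x : ℝ) : tanh x / x ≤ 1 := by
  rcases eq_or_ne x 0 with rfl | hx
  · simp
  rw [← tanh_abs_div_abs, tanh_eq_sinh_div_cosh, div_div,
    div_le_one (mul_pos (cosh_pos _) (abs_pos.mpr hx))]
  linarith [sinh_le_mul_cosh (abs_nonneg x)]

lemma three_div_three_add_sq_le_tanh_div_self {x : ℝ} (hx : x ≠ 0) :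
    3 / (3 + x ^ 2) ≤ tanh x / x := by
  rw [← tanh_abs_div_abs, ← sq_abs, tanh_eq_sinh_div_cosh, div_div,
    div_le_div_iff₀ (by positivity) (mul_pos (cosh_pos _) (abs_pos.mpr hx))]
  linarith [three_mul_mul_cosh_le (abs_nonneg x)]

end Real

theorem stmt_7_general (r x : ℝ) (h0 : 0 < |x|) (h1 : |x| < r) :
    ((r ^ 2 - x ^ 2) / r ^ 2) ^ (r ^ 2 / 3) ≤ Real.tanh x / x ∧
      Real.tanh x / x ≤ 1 := by
  have hr : r ≠ 0 := (h0.trans h1).ne'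
  have hxr : x ^ 2 / r ^ 2 ≤ 1 := by
    rw [div_le_one (by positivity), ← sq_abs]
    exact pow_le_pow_left₀ h0.le h1.le 2
  refine ⟨?_, tanh_div_self_le_one x⟩
  calc ((r ^ 2 - x ^ 2) / r ^ 2) ^ (r ^ 2 / 3) = (1 - x ^ 2 / r ^ 2) ^ (r ^ 2 / 3) := by
        rw [sub_div, div_self (pow_ne_zero 2 hr)]
    _ ≤ exp (-(x ^ 2 / r ^ 2 * (r ^ 2 / 3))) := one_sub_rpow_le_exp_neg_mul hxr (by positivity)
    _ = exp (-(x ^ 2 / 3)) := by field_simp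
    _ ≤ (1 + x ^ 2 / 3)⁻¹ := exp_neg_le_inv_one_add (by positivity)
    _ = 3 / (3 + x ^ 2) := by field_simp
    _ ≤ tanh x / x := three_div_three_add_sq_le_tanh_div_self (abs_pos.mp h0)

theorem stmt_7 (r x : ℝ) (hr : 0 < r) (h0 : 0 < |x|) (h1 : |x| < r) :
    ((r ^ 2 - x ^ 2) / r ^ 2) ^ (r ^ 2 / 3) ≤ Real.tanh x / x ∧
      Real.tanh x / x ≤ 1 :=
  stmt_7_general r x h0 h1
end

section
/- For every real number x with 0 < |x| < π/2, one has (π²/(π² − 4x²))^(π²/12) ≤ (tan x)/x ≤ π²/(π² − 4x²). -/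
/-!
The upper bound is equivalent to `(π² - 4x²) sin x ≤ π² x cos x`. After taking logarithms the
lower bound says that `F = logTanRatioGap`,
`F x = log (tan x / x) - π²/12 * log (π² / (π² - 4x²))`, is nonnegative.
`F` tends to `0` at `0⁺` and is increasing on `(0, π/2)`, because with `t = 2x` the inequality
`F' ≥ 0` becomes `π²/6 * t² sin t ≤ (t - sin t)(π² - t²)` on `(0, π)`.

Both trigonometric inequalities reduce to polynomial estimates, using `3.14 < π < 3.15` and the
fact that the truncated Taylor series of `sin` and `cos` bound them from alternate sides on
`[0, ∞)`. Near the right endpoint both sides vanish, so there one expands around `π/2`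
(resp. `π`) instead.
-/

open Real Set Filter Topology

noncomputable def sinTaylor (n : ℕ) (t : ℝ) : ℝ :=
  ∑ k ∈ Finset.range n, (-1) ^ k * t ^ (2 * k + 1) / (2 * k + 1).factorial

noncomputable def cosTaylor (n : ℕ) (t : ℝ) : ℝ :=
  ∑ k ∈ Finset.range n, (-1) ^ k * t ^ (2 * k) / (2 * k).factorial

theorem hasDerivAt_sinTaylor (n : ℕ) (t : ℝ) : HasDerivAt (sinTaylor n) (cosTaylor n t) t := by
  unfold sinTaylor cosTaylor
  refine (HasDerivAt.fun_sum fun k _ =>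
    ((hasDerivAt_pow _ t).const_mul _).div_const _).congr_deriv ?_
  refine Finset.sum_congr rfl fun k _ => ?_
  rw [Nat.factorial_succ]
  push_cast
  field_simp

theorem hasDerivAt_cosTaylor (n : ℕ) (t : ℝ) :
    HasDerivAt (cosTaylor (n + 1)) (-sinTaylor n t) t := by
  have hsplit : cosTaylor (n + 1) = fun t =>
      ∑ k ∈ Finset.range n, (-1 : ℝ) ^ (k + 1) * t ^ (2 * k + 2) / (2 * k + 2).factorial
        + 1 := by
    funext t
    simp [cosTaylor, Finset.sum_range_succ', mul_add]
  rw [hsplit]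
  refine ((HasDerivAt.fun_sum fun k _ =>
    ((hasDerivAt_pow _ t).const_mul _).div_const _).add_const 1).congr_deriv ?_
  rw [sinTaylor, ← Finset.sum_neg_distrib]
  refine Finset.sum_congr rfl fun k _ => ?_
  rw [show 2 * k + 2 = (2 * k + 1) + 1 by ring, Nat.factorial_succ]
  push_cast
  field_simp
  ring

theorem nonneg_of_hasDerivAt_nonneg {f f' : ℝ → ℝ} (hf : ∀ t, HasDerivAt f (f' t) t)
    (h0 : f 0 = 0) (hf' : ∀ t, 0 ≤ t → 0 ≤ f' t) {x : ℝ} (hx : 0 ≤ x) : 0 ≤ f x := by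
  have hmono : MonotoneOn f (Ici 0) :=
    monotoneOn_of_hasDerivWithinAt_nonneg (convex_Ici 0)
      (fun t _ => (hf t).continuousAt.continuousWithinAt)
      (fun t _ => (hf t).hasDerivWithinAt) (fun t ht => hf' t (interior_subset ht))
  simpa [h0] using hmono self_mem_Ici hx hx

theorem neg_one_pow_mul_sin_sub_sinTaylor_nonneg_of_cos {n : ℕ}
    (hcos : ∀ t, 0 ≤ t → 0 ≤ (-1) ^ n * (cos t - cosTaylor n t)) {t : ℝ} (ht : 0 ≤ t) :
    0 ≤ (-1) ^ n * (sin t - sinTaylor n t) :=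
  nonneg_of_hasDerivAt_nonneg
    (fun s => ((hasDerivAt_sin s).sub (hasDerivAt_sinTaylor n s)).const_mul _)
    (by simp [sinTaylor]) hcos ht

theorem neg_one_pow_mul_cos_sub_cosTaylor_nonneg (n : ℕ) {t : ℝ} (ht : 0 ≤ t) :
    0 ≤ (-1) ^ (n + 1) * (cos t - cosTaylor (n + 1) t) := by
  induction n generalizing t with
  | zero => simpa [cosTaylor] using cos_le_one t
  | succ n ih =>
    refine nonneg_of_hasDerivAt_nonneg
      (fun s => ((hasDerivAt_cos s).sub (hasDerivAt_cosTaylor (n + 1) s)).const_mul _)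
      (by simp [cosTaylor, Finset.sum_range_succ']) (fun s hs => ?_) ht
    have := neg_one_pow_mul_sin_sub_sinTaylor_nonneg_of_cos (fun _ => ih) hs
    rw [pow_succ]
    linarith

theorem neg_one_pow_mul_sin_sub_sinTaylor_nonneg (n : ℕ) {t : ℝ} (ht : 0 ≤ t) :
    0 ≤ (-1) ^ (n + 1) * (sin t - sinTaylor (n + 1) t) :=
  neg_one_pow_mul_sin_sub_sinTaylor_nonneg_of_cos
    (fun _ => neg_one_pow_mul_cos_sub_cosTaylor_nonneg n) ht

theorem sin_le_taylor_five {t : ℝ} (ht : 0 ≤ t) : sin t ≤ t - t ^ 3 / 6 + t ^ 5 / 120 := by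
  have := neg_one_pow_mul_sin_sub_sinTaylor_nonneg 2 ht
  simp [sinTaylor, Finset.sum_range_succ, Nat.factorial] at this
  linarith

theorem taylor_six_le_cos {t : ℝ} (ht : 0 ≤ t) :
    1 - t ^ 2 / 2 + t ^ 4 / 24 - t ^ 6 / 720 ≤ cos t := by
  have := neg_one_pow_mul_cos_sub_cosTaylor_nonneg 3 ht
  simp [cosTaylor, Finset.sum_range_succ, Nat.factorial] at this
  linarith

theorem sin_le_taylor_nine {t : ℝ} (ht : 0 ≤ t) :
    sin t ≤ t - t ^ 3 / 6 + t ^ 5 / 120 - t ^ 7 / 5040 + t ^ 9 / 362880 := by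
  have := neg_one_pow_mul_sin_sub_sinTaylor_nonneg 4 ht
  simp [sinTaylor, Finset.sum_range_succ, Nat.factorial] at this
  linarith

theorem pi_sq_sub_mul_sin_le_of_le {x : ℝ} (hx : 0 < x) (hx' : x ≤ 7 / 5) :
    (π ^ 2 - 4 * x ^ 2) * sin x ≤ π ^ 2 * x * cos x := by
  have hπ := pi_gt_d2
  have hπ' := pi_lt_d2
  have hq :
      0 ≤ (4 - π ^ 2 / 3) + (π ^ 2 / 30 - 2 / 3) * x ^ 2 + (1 / 30 - π ^ 2 / 720) * x ^ 4 := by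
    have hu : x ^ 2 ≤ 49 / 25 := by nlinarith
    nlinarith [mul_nonneg (sq_nonneg x) (sub_nonneg.2 hu), sq_nonneg x, pow_nonneg (sq_nonneg x) 2,
      mul_nonneg (sq_nonneg x) (sub_nonneg.2 hπ'.le)]
  have hid : π ^ 2 * x * (1 - x ^ 2 / 2 + x ^ 4 / 24 - x ^ 6 / 720)
      - (π ^ 2 - 4 * x ^ 2) * (x - x ^ 3 / 6 + x ^ 5 / 120)
      = x ^ 3 * ((4 - π ^ 2 / 3) + (π ^ 2 / 30 - 2 / 3) * x ^ 2
        + (1 / 30 - π ^ 2 / 720) * x ^ 4) := by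
    ring
  calc (π ^ 2 - 4 * x ^ 2) * sin x ≤ (π ^ 2 - 4 * x ^ 2) * (x - x ^ 3 / 6 + x ^ 5 / 120) :=
        mul_le_mul_of_nonneg_left (sin_le_taylor_five hx.le) (by nlinarith)
    _ ≤ π ^ 2 * x * (1 - x ^ 2 / 2 + x ^ 4 / 24 - x ^ 6 / 720) := by
        nlinarith [mul_nonneg (pow_nonneg hx.le 3) hq]
    _ ≤ π ^ 2 * x * cos x := mul_le_mul_of_nonneg_left (taylor_six_le_cos hx.le) (by positivity)

theorem pi_sq_sub_mul_sin_le_of_lt {x : ℝ} (hx : 7 / 5 < x) (hx' : x < π / 2) :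
    (π ^ 2 - 4 * x ^ 2) * sin x ≤ π ^ 2 * x * cos x := by
  have hπ := pi_gt_d2
  have hπ' := pi_lt_d2
  obtain ⟨s, rfl⟩ : ∃ s, x = π / 2 - s := ⟨π / 2 - x, by ring⟩
  have hs : 0 < s := by linarith
  rw [sin_pi_div_two_sub, cos_pi_div_two_sub]
  have hfactor : π ^ 2 - 4 * (π / 2 - s) ^ 2 = 4 * s * (π - s) := by ring
  have hkey : 4 * (π - s) ≤ π ^ 2 * (π / 2 - s) * (1 - s ^ 2 / 6) := by
    have h13 : 13 ≤ π ^ 2 * (π / 2 - s) := by nlinarith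
    have h99 : 99 / 100 ≤ 1 - s ^ 2 / 6 := by nlinarith
    nlinarith [mul_le_mul h13 h99 (by norm_num) (by linarith)]
  calc (π ^ 2 - 4 * (π / 2 - s) ^ 2) * cos s ≤ 4 * s * (π - s) := by
        rw [hfactor]
        exact mul_le_of_le_one_right (by nlinarith) (cos_le_one s)
    _ ≤ π ^ 2 * (π / 2 - s) * (s - s ^ 3 / 6) := by
        nlinarith [mul_le_mul_of_nonneg_left hkey hs.le]
    _ ≤ π ^ 2 * (π / 2 - s) * sin s :=
        mul_le_mul_of_nonneg_left (sin_ge_sub_cube hs.le) (by nlinarith)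

theorem tan_div_self_le {x : ℝ} (hx : 0 < x) (hx' : x < π / 2) :
    tan x / x ≤ π ^ 2 / (π ^ 2 - 4 * x ^ 2) := by
  have hcos : 0 < cos x := cos_pos_of_mem_Ioo ⟨by linarith, hx'⟩
  have hd : 0 < π ^ 2 - 4 * x ^ 2 := by nlinarith [pi_pos]
  have key : (π ^ 2 - 4 * x ^ 2) * sin x ≤ π ^ 2 * x * cos x :=
    (le_or_gt x (7 / 5)).elim (pi_sq_sub_mul_sin_le_of_le hx) fun h =>
      pi_sq_sub_mul_sin_le_of_lt h hx'
  rw [tan_eq_sin_div_cos, div_div, div_le_div_iff₀ (by positivity) hd]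
  linarith

theorem sq_mul_sin_le_sub_sin_mul_of_le {t : ℝ} (ht : 0 < t) (ht' : t ≤ 13 / 5) :
    π ^ 2 / 6 * t ^ 2 * sin t ≤ (t - sin t) * (π ^ 2 - t ^ 2) := by
  have hπ := pi_gt_d2
  have hπ' := pi_lt_d2
  set U := t - t ^ 3 / 6 + t ^ 5 / 120 - t ^ 7 / 5040 + t ^ 9 / 362880 with hU
  have hq : ∀ u : ℝ, 0 ≤ u → u ≤ 169 / 25 → 0 ≤ (7 * π ^ 2 / 360 - 1 / 6)
      + (1 / 120 - π ^ 2 / 840) * u + (11 * π ^ 2 / 362880 - 1 / 5040) * u ^ 2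
      + (1 / 362880 - π ^ 2 / 2177280) * u ^ 3 := by
    intro u hu hu'
    have ha0 : 1 / 40 ≤ 7 * π ^ 2 / 360 - 1 / 6 := by nlinarith
    have ha1 : -7 / 2000 ≤ 1 / 120 - π ^ 2 / 840 := by nlinarith
    have ha2 : 0 ≤ 11 * π ^ 2 / 362880 - 1 / 5040 := by nlinarith
    have ha3 : -1 / 500000 ≤ 1 / 362880 - π ^ 2 / 2177280 := by nlinarith
    have hcube : u ^ 3 ≤ (169 / 25) ^ 2 * u := by
      nlinarith [mul_le_mul hu' hu' hu (by norm_num), mul_nonneg hu hu]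
    nlinarith [mul_le_mul_of_nonneg_right ha1 hu, mul_nonneg ha2 (sq_nonneg u),
      mul_le_mul_of_nonneg_right ha3 (pow_nonneg hu 3)]
  have hid : (t - U) * (π ^ 2 - t ^ 2) - π ^ 2 / 6 * t ^ 2 * U
      = t ^ 5 * ((7 * π ^ 2 / 360 - 1 / 6) + (1 / 120 - π ^ 2 / 840) * t ^ 2
      + (11 * π ^ 2 / 362880 - 1 / 5040) * (t ^ 2) ^ 2
      + (1 / 362880 - π ^ 2 / 2177280) * (t ^ 2) ^ 3) := by
    rw [hU]; ring
  have hsin : sin t ≤ U := sin_le_taylor_nine ht.le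
  calc π ^ 2 / 6 * t ^ 2 * sin t ≤ π ^ 2 / 6 * t ^ 2 * U :=
        mul_le_mul_of_nonneg_left hsin (by positivity)
    _ ≤ (t - U) * (π ^ 2 - t ^ 2) := by
        nlinarith [mul_nonneg (pow_nonneg ht.le 5) (hq (t ^ 2) (sq_nonneg t) (by nlinarith))]
    _ ≤ (t - sin t) * (π ^ 2 - t ^ 2) :=
        mul_le_mul_of_nonneg_right (by linarith) (by nlinarith)

theorem sq_mul_sin_le_sub_sin_mul_of_lt {t : ℝ} (ht : 13 / 5 < t) (ht' : t < π) :
    π ^ 2 / 6 * t ^ 2 * sin t ≤ (t - sin t) * (π ^ 2 - t ^ 2) := by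
  have hπ := pi_gt_d2
  have hπ' := pi_lt_d2
  obtain ⟨s, rfl⟩ : ∃ s, t = π - s := ⟨π - t, by ring⟩
  have hs : 0 < s := by linarith
  rw [sin_pi_sub]
  have hfactor : π ^ 2 - (π - s) ^ 2 = s * (2 * π - s) := by ring
  have hquad : π ^ 2 / 6 * (π - s) ^ 2 ≤ (π - 2 * s) * (2 * π - s) := by
    have hb0 : 17 / 5 ≤ 2 * π ^ 2 - π ^ 4 / 6 := by
      have hc : 9.8596 < π ^ 2 := by nlinarith
      have hc' : π ^ 2 < 9.9225 := by nlinarith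
      nlinarith [mul_pos (sub_pos.2 hc) (sub_pos.2 hc')]
    have hb1 : -27 / 5 ≤ π ^ 3 / 3 - 5 * π := by nlinarith
    have hb2 : 0 ≤ 2 - π ^ 2 / 6 := by nlinarith
    nlinarith [mul_le_mul_of_nonneg_right hb1 hs.le, mul_nonneg hb2 (sq_nonneg s)]
  calc π ^ 2 / 6 * (π - s) ^ 2 * sin s ≤ π ^ 2 / 6 * (π - s) ^ 2 * s :=
        mul_le_mul_of_nonneg_left (sin_le hs.le) (by positivity)
    _ ≤ (π - s - s) * (π ^ 2 - (π - s) ^ 2) := by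
        rw [hfactor]; nlinarith [mul_le_mul_of_nonneg_left hquad hs.le]
    _ ≤ (π - s - sin s) * (π ^ 2 - (π - s) ^ 2) :=
        mul_le_mul_of_nonneg_right (by linarith [sin_le hs.le]) (by nlinarith)

theorem sq_mul_sin_le_sub_sin_mul {t : ℝ} (ht : 0 < t) (ht' : t < π) :
    π ^ 2 / 6 * t ^ 2 * sin t ≤ (t - sin t) * (π ^ 2 - t ^ 2) :=
  (le_or_gt t (13 / 5)).elim (sq_mul_sin_le_sub_sin_mul_of_le ht) fun h =>
    sq_mul_sin_le_sub_sin_mul_of_lt h ht'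

theorem le_of_tendsto_of_monotoneOn {f : ℝ → ℝ} {a b L x : ℝ} (hf : MonotoneOn f (Ioo a b))
    (hL : Tendsto f (𝓝[>] a) (𝓝 L)) (hx : x ∈ Ioo a b) : L ≤ f x := by
  refine le_of_tendsto hL ?_
  filter_upwards [Ioo_mem_nhdsGT hx.1] with y hy
  exact hf ⟨hy.1, hy.2.trans hx.2⟩ hx hy.2.le

theorem tendsto_tan_div_self : Tendsto (fun x => tan x / x) (𝓝[≠] 0) (𝓝 1) := by
  have h := hasDerivAt_iff_tendsto_slope.mp (by simpa using hasDerivAt_tan (x := 0) (by simp))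
  refine h.congr fun x => ?_
  simp [slope_def_field]

noncomputable def logTanRatioGap (x : ℝ) : ℝ :=
  log (tan x / x) - π ^ 2 / 12 * log (π ^ 2 / (π ^ 2 - 4 * x ^ 2))

theorem tendsto_logTanRatioGap : Tendsto logTanRatioGap (𝓝[>] 0) (𝓝 0) := by
  have hratio : Tendsto (fun x => log (tan x / x)) (𝓝[>] 0) (𝓝 0) := by
    simpa [Function.comp_def] using (continuousAt_log one_ne_zero).tendsto.comp
      (tendsto_tan_div_self.mono_left (nhdsWithin_mono 0 (s := Ioi 0) fun _ hy => ne_of_gt hy))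
  have hpow : ContinuousAt (fun x : ℝ => log (π ^ 2 / (π ^ 2 - 4 * x ^ 2))) 0 :=
    ((continuousAt_const.div (by fun_prop) (by simp [pi_ne_zero])).log
      (by simp [pi_ne_zero]))
  have := hratio.sub ((hpow.tendsto.mono_left nhdsWithin_le_nhds).const_mul (π ^ 2 / 12))
  unfold logTanRatioGap
  simpa [div_self (pow_ne_zero 2 pi_ne_zero)] using this

theorem hasDerivAt_logTanRatioGap {x : ℝ} (hx : 0 < x) (hx' : x < π / 2) :
    HasDerivAt logTanRatioGap ((x - sin x * cos x) / (x * (sin x * cos x))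
      - π ^ 2 / 12 * (8 * x / (π ^ 2 - 4 * x ^ 2))) x := by
  have hcos : 0 < cos x := cos_pos_of_mem_Ioo ⟨by linarith, hx'⟩
  have hsin : 0 < sin x := sin_pos_of_pos_of_lt_pi hx (by linarith [pi_pos])
  have hd : 0 < π ^ 2 - 4 * x ^ 2 := by nlinarith [pi_pos]
  have hratio := ((hasDerivAt_tan hcos.ne').div (hasDerivAt_id' x) hx.ne').log
    (div_pos (tan_pos_of_pos_of_lt_pi_div_two hx hx') hx).ne'
  have hquot := (hasDerivAt_const x (π ^ 2)).div
    ((hasDerivAt_const x (π ^ 2)).sub ((hasDerivAt_pow 2 x).const_mul 4)) hd.ne'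
  have hpow := (hquot.log (div_pos (by positivity) hd).ne').const_mul (π ^ 2 / 12)
  refine (hratio.sub hpow).congr_deriv ?_
  simp only [Pi.div_apply, Pi.sub_apply, tan_eq_sin_div_cos]
  field_simp
  ring

-- `1 / (sin x cos x) = 2 / sin (2x)` turns `F' ≥ 0` into `sq_mul_sin_le_sub_sin_mul` at `t = 2x`.
theorem monotoneOn_logTanRatioGap : MonotoneOn logTanRatioGap (Ioo 0 (π / 2)) := by
  refine monotoneOn_of_hasDerivWithinAt_nonneg (convex_Ioo 0 (π / 2))
    (fun x hx => (hasDerivAt_logTanRatioGap hx.1 hx.2).continuousAt.continuousWithinAt)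
    (fun x hx => (hasDerivAt_logTanRatioGap (interior_subset hx).1
      (interior_subset hx).2).hasDerivWithinAt) fun x hx => ?_
  obtain ⟨hx, hx'⟩ := interior_subset hx
  have hsc : 0 < sin x * cos x :=
    mul_pos (sin_pos_of_pos_of_lt_pi hx (by linarith [pi_pos]))
      (cos_pos_of_mem_Ioo ⟨by linarith, hx'⟩)
  have hd : 0 < π ^ 2 - 4 * x ^ 2 := by nlinarith [pi_pos]
  have key := sq_mul_sin_le_sub_sin_mul (t := 2 * x) (by linarith) (by linarith)
  rw [sin_two_mul] at key
  rw [sub_nonneg, mul_div_assoc', div_le_div_iff₀ (by positivity) (by positivity)]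
  nlinarith

theorem rpow_le_tan_div_self {x : ℝ} (hx : 0 < x) (hx' : x < π / 2) :
    (π ^ 2 / (π ^ 2 - 4 * x ^ 2)) ^ (π ^ 2 / 12) ≤ tan x / x := by
  have hgap : 0 ≤ logTanRatioGap x :=
    le_of_tendsto_of_monotoneOn monotoneOn_logTanRatioGap tendsto_logTanRatioGap ⟨hx, hx'⟩
  have hd : 0 < π ^ 2 - 4 * x ^ 2 := by nlinarith [pi_pos]
  have hbase : 0 < π ^ 2 / (π ^ 2 - 4 * x ^ 2) := by positivity
  have hratio : 0 < tan x / x := div_pos (tan_pos_of_pos_of_lt_pi_div_two hx hx') hx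
  rw [← log_le_log_iff (rpow_pos_of_pos hbase _) hratio, log_rpow hbase]
  unfold logTanRatioGap at hgap
  linarith

theorem tan_abs_div_abs (x : ℝ) : tan |x| / |x| = tan x / x := by
  rcases abs_cases x with ⟨h, -⟩ | ⟨h, -⟩ <;> simp [h, tan_neg, neg_div_neg_eq]

theorem stmt_8 (x : ℝ) (h0 : 0 < |x|) (h1 : |x| < π / 2) :
    (π ^ 2 / (π ^ 2 - 4 * x ^ 2)) ^ (π ^ 2 / 12) ≤ Real.tan x / x ∧
      Real.tan x / x ≤ π ^ 2 / (π ^ 2 - 4 * x ^ 2) := by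
  rw [← tan_abs_div_abs, ← sq_abs x]
  exact ⟨rpow_le_tan_div_self h0 h1, tan_div_self_le h0 h1⟩
end

section
/- The function x ↦ log((sin x)/x) / log((π² − x²)/π²) is strictly decreasing on the open interval (0, π). -/
/-!
Write `t = (x / π) ^ 2`. Euler's product gives `log (sin x / x) = ∑ₖ log (1 - t / (k + 1) ^ 2)`,
whose `k = 0` term is the denominator `log (1 - t)`, so the quotient is
`∑ₖ log (1 - t / c) / log (1 - t)` with `c = (k + 1) ^ 2`. Each summand is nonincreasing in
`t ∈ (0, 1)`, strictly when `c > 1`: the sign of its derivative is that of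
`(1 - t) log (1 / (1 - t)) - (c - t) log (c / (c - t))`, and `s ↦ (s - t) log (s / (s - t))`
is increasing.
-/

open Real Set Filter Topology

namespace Real

lemma strictMonoOn_sub_mul_log_div_sub {t : ℝ} (ht : 0 < t) :
    StrictMonoOn (fun s => (s - t) * log (s / (s - t))) (Ioi t) := by
  have hderiv : ∀ s ∈ Ioi t,
      HasDerivAt (fun s => (s - t) * log (s / (s - t))) (log (s / (s - t)) - t / s) s := by
    intro s (hs : t < s)
    have hs0 : 0 < s := ht.trans hs
    have hst : 0 < s - t := sub_pos.2 hs
    have hsub := (hasDerivAt_id s).sub_const t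
    have hlog := ((hasDerivAt_id s).div hsub hst.ne').log (div_pos hs0 hst).ne'
    refine (hsub.mul hlog).congr_deriv ?_
    simp only [id, Pi.div_apply]
    field_simp
    ring
  refine strictMonoOn_of_deriv_pos (convex_Ioi t)
    (fun s hs => (hderiv s hs).continuousAt.continuousWithinAt) fun s hs => ?_
  rw [interior_Ioi] at hs
  have hs0 : 0 < s := ht.trans hs
  have hst : 0 < s - t := sub_pos.2 hs
  have hlog := log_lt_sub_one_of_pos (div_pos hst hs0) (div_ne_one_of_ne (by linarith))
  rw [(hderiv s hs).deriv, ← inv_div, log_inv]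
  have : (s - t) / s - 1 = -(t / s) := by field_simp; ring
  linarith

lemma strictAntiOn_log_one_sub_div_div_log_one_sub {c : ℝ} (hc : 1 < c) :
    StrictAntiOn (fun t => log (1 - t / c) / log (1 - t)) (Ioo 0 1) := by
  have hc0 : 0 < c := one_pos.trans hc
  have hderiv : ∀ t ∈ Ioo (0 : ℝ) 1, HasDerivAt (fun t => log (1 - t / c) / log (1 - t))
      ((log (1 - t / c) / (1 - t) - log (1 - t) / (c - t)) / log (1 - t) ^ 2) t := by
    rintro t ⟨ht0, ht1⟩
    have h1t : 0 < 1 - t := sub_pos.2 ht1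
    have hct : 0 < c - t := by linarith
    have h1tc : 0 < 1 - t / c := by rw [sub_pos, div_lt_one hc0]; linarith
    have hnum := (((hasDerivAt_id t).div_const c).const_sub 1).log h1tc.ne'
    have hden := ((hasDerivAt_id t).const_sub 1).log h1t.ne'
    refine (hnum.div hden (log_neg h1t (by linarith)).ne).congr_deriv ?_
    simp only [id]
    field_simp
    ring
  refine strictAntiOn_of_deriv_neg (convex_Ioo 0 1)
    (fun t ht => (hderiv t ht).continuousAt.continuousWithinAt) fun t ht => ?_
  rw [interior_Ioo] at ht
  obtain ⟨ht0, ht1⟩ := ht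
  have h1t : 0 < 1 - t := sub_pos.2 ht1
  have hct : 0 < c - t := by linarith
  have hlog1t : log (1 - t) ≠ 0 := (log_neg h1t (by linarith)).ne
  rw [(hderiv t ⟨ht0, ht1⟩).deriv]
  refine div_neg_of_neg_of_pos ?_ (pow_two_pos_of_ne_zero hlog1t)
  have key := strictMonoOn_sub_mul_log_div_sub ht0 (mem_Ioi.2 ht1) (mem_Ioi.2 (ht1.trans hc)) hc
  have e1 : log (1 / (1 - t)) = -log (1 - t) := by rw [one_div, log_inv]
  have e2 : log (c / (c - t)) = -log (1 - t / c) := by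
    rw [← log_inv]; congr 1; field_simp
  simp only [e1, e2] at key
  rw [sub_neg, div_lt_div_iff₀ h1t hct]
  linarith

lemma antitoneOn_log_one_sub_div_div_log_one_sub {c : ℝ} (hc : 1 ≤ c) :
    AntitoneOn (fun t => log (1 - t / c) / log (1 - t)) (Ioo 0 1) := by
  rcases hc.eq_or_lt with rfl | hc
  · rintro s ⟨hs0, hs1⟩ t ⟨ht0, ht1⟩ -
    simp only [div_one]
    rw [div_self (log_neg (sub_pos.2 hs1) (by linarith)).ne,
      div_self (log_neg (sub_pos.2 ht1) (by linarith)).ne]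
  · exact (strictAntiOn_log_one_sub_div_div_log_one_sub hc).antitoneOn

lemma summable_log_one_sub_div_nat_add_one_sq (t : ℝ) :
    Summable fun k : ℕ => log (1 - t / ((k : ℝ) + 1) ^ 2) := by
  have h : Summable fun k : ℕ => -t / ((k : ℝ) + 1) ^ 2 := by
    have := (summable_nat_add_iff 1).2 (summable_one_div_nat_pow.2 one_lt_two)
    simpa [div_eq_mul_one_div (-t)] using this.mul_left (-t)
  simpa [neg_div, ← sub_eq_add_neg] using summable_log_one_add_of_summable h

lemma strictAntiOn_tsum_log_one_sub_div_nat_add_one_sq_div_log_one_sub :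
    StrictAntiOn (fun t => (∑' k : ℕ, log (1 - t / ((k : ℝ) + 1) ^ 2)) / log (1 - t))
      (Ioo 0 1) := by
  intro s hs t ht hst
  simp only [← tsum_div_const]
  refine Summable.tsum_lt_tsum (i := 1)
    (fun k => antitoneOn_log_one_sub_div_div_log_one_sub (by nlinarith [k.cast_nonneg (α := ℝ)])
      hs ht hst.le)
    (strictAntiOn_log_one_sub_div_div_log_one_sub (by norm_num) hs ht hst)
    ((summable_log_one_sub_div_nat_add_one_sq t).div_const _)
    ((summable_log_one_sub_div_nat_add_one_sq s).div_const _)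

lemma hasSum_log_one_sub_sq_div_pi_div_nat_add_one_sq {x : ℝ} (hx : sin x ≠ 0) :
    HasSum (fun k : ℕ => log (1 - (x / π) ^ 2 / ((k : ℝ) + 1) ^ 2)) (log (sin x / x)) := by
  have hx0 : x ≠ 0 := fun h => hx (h ▸ sin_zero)
  set f : ℕ → ℝ := fun k => 1 - (x / π) ^ 2 / ((k : ℝ) + 1) ^ 2
  have hprod : Tendsto (fun n => ∏ k ∈ Finset.range n, f k) atTop (𝓝 (sin x / x)) := by
    have h := (tendsto_euler_sin_prod (x / π)).div_const x
    rw [mul_div_cancel₀ x pi_ne_zero] at h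
    exact h.congr fun n => mul_div_cancel_left₀ _ hx0
  have hf0 : ∀ k, f k ≠ 0 := by
    intro k hk
    have hzero : ∀ᶠ n in atTop, ∏ j ∈ Finset.range n, f j = 0 :=
      eventually_atTop.2 ⟨k + 1, fun n hn => Finset.prod_eq_zero (Finset.mem_range.2 hn) hk⟩
    exact div_ne_zero hx hx0 <| tendsto_nhds_unique hprod <|
      tendsto_const_nhds.congr' (hzero.mono fun _ h => h.symm)
  refine (summable_log_one_sub_div_nat_add_one_sq _).hasSum_iff_tendsto_nat.2 ?_
  refine ((continuousAt_log (div_ne_zero hx hx0)).tendsto.comp hprod).congr fun n => ?_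
  exact log_prod fun k _ => hf0 k

end Real

theorem stmt_9 :
    StrictAntiOn
      (fun x : ℝ => Real.log (Real.sin x / x) / Real.log ((π ^ 2 - x ^ 2) / π ^ 2))
      (Set.Ioo 0 π) := by
  have hmono : StrictMonoOn (fun x : ℝ => (x / π) ^ 2) (Ioo 0 π) := by
    rintro x ⟨hx, -⟩ y - hxy
    dsimp only
    gcongr
  have hmaps : MapsTo (fun x : ℝ => (x / π) ^ 2) (Ioo 0 π) (Ioo 0 1) := by
    rintro x ⟨hx0, hxπ⟩
    have hxπ' : x / π < 1 := (div_lt_one pi_pos).2 hxπ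
    exact ⟨by positivity, pow_lt_one₀ (by positivity) hxπ' two_ne_zero⟩
  refine (strictAntiOn_tsum_log_one_sub_div_nat_add_one_sq_div_log_one_sub.comp_strictMonoOn
    hmono hmaps).congr fun x ⟨hx0, hxπ⟩ => ?_
  have hsin : sin x ≠ 0 := (sin_pos_of_pos_of_lt_pi hx0 hxπ).ne'
  rw [Function.comp_apply, (hasSum_log_one_sub_sq_div_pi_div_nat_add_one_sq hsin).tsum_eq]
  congr 2
  field_simp
end

section
/- The function x ↦ log(cos x) / log((π² − 4x²)/π²) is strictly decreasing on the open interval (0, π/2). -/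
/-!
Write the quotient as `f / g` with `f x = log (cos x)` and `g x = log (1 - 4 x² / π²)`, both
vanishing at `0`. By the monotone form of l'Hôpital's rule (Cauchy's mean value theorem on
`[0, x]` gives `f x / g x = f' c / g' c` for some `c < x`), it suffices that
`f' / g' = tan x · (π² - 4 x²) / (8 x)` is strictly decreasing. With `t = 2 x` the sign of its
derivative is that of Redheffer's inequality `t (π² - t²) < (π² + t²) sin t` on `(0, π)`, which
follows from `sin t > t - t³ / 6` near `0` and near `π`, and from `cos u ≥ 1 - u² / 2` with
`u = t - π / 2` in between.
-/

open Real Set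

theorem strictAntiOn_div_of_hasDerivAt_of_neg {f g f' g' : ℝ → ℝ} {a b : ℝ}
    (hfc : ContinuousOn f (Ico a b)) (hgc : ContinuousOn g (Ico a b))
    (hf : ∀ x ∈ Ioo a b, HasDerivAt f (f' x) x) (hg : ∀ x ∈ Ioo a b, HasDerivAt g (g' x) x)
    (hfa : f a = 0) (hga : g a = 0) (hg' : ∀ x ∈ Ioo a b, g' x < 0)
    (hanti : StrictAntiOn (fun x => f' x / g' x) (Ioo a b)) :
    StrictAntiOn (fun x => f x / g x) (Ioo a b) := by
  have hg_neg : ∀ x ∈ Ioo a b, g x < 0 := by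
    have : StrictAntiOn g (Ico a b) := strictAntiOn_of_hasDerivWithinAt_neg (convex_Ico a b) hgc
      (fun x hx => (hg x (by simpa using hx)).hasDerivWithinAt) (by simpa using hg')
    intro x hx
    simpa [hga] using this (left_mem_Ico.2 (hx.1.trans hx.2)) (Ioo_subset_Ico_self hx) hx.1
  have hslope : ∀ x ∈ Ioo a b, f' x / g' x < f x / g x := by
    intro x hx
    obtain ⟨c, hc, hcx⟩ := exists_ratio_hasDerivAt_eq_ratio_slope f f' hx.1
      (hfc.mono (Icc_subset_Ico_right hx.2)) (fun y hy => hf y ⟨hy.1, hy.2.trans hx.2⟩)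
      g g' (hgc.mono (Icc_subset_Ico_right hx.2)) (fun y hy => hg y ⟨hy.1, hy.2.trans hx.2⟩)
    have hc' : c ∈ Ioo a b := ⟨hc.1, hc.2.trans hx.2⟩
    have hratio : f x / g x = f' c / g' c := by
      rw [div_eq_div_iff (hg_neg x hx).ne (hg' c hc').ne]
      rw [hfa, hga, sub_zero, sub_zero] at hcx
      linarith
    exact hratio ▸ hanti hc' hx hc.2
  refine strictAntiOn_of_hasDerivWithinAt_neg (convex_Ioo a b)
    (fun x hx => ((hf x hx).div (hg x hx) (hg_neg x hx).ne).continuousAt.continuousWithinAt)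
    (fun x hx => ((hf x (by simpa using hx)).div (hg x (by simpa using hx))
      (hg_neg x (by simpa using hx)).ne).hasDerivWithinAt) ?_
  intro x hx
  rw [interior_Ioo] at hx
  have hgx := hg_neg x hx
  have hg'x := hg' x hx
  have hnum : f' x * g x - f x * g' x = g' x * g x * (f' x / g' x - f x / g x) := by
    field_simp [hgx.ne, hg'x.ne]
  rw [hnum]
  exact div_neg_of_neg_of_pos (mul_neg_of_pos_of_neg (mul_pos_of_neg_of_neg hg'x hgx)
    (sub_neg.2 (hslope x hx))) (sq_pos_of_neg hgx)

theorem strictAntiOn_div_of_hasDerivAt {f g f' g' : ℝ → ℝ} {a b : ℝ}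
    (hfc : ContinuousOn f (Ico a b)) (hgc : ContinuousOn g (Ico a b))
    (hf : ∀ x ∈ Ioo a b, HasDerivAt f (f' x) x) (hg : ∀ x ∈ Ioo a b, HasDerivAt g (g' x) x)
    (hfa : f a = 0) (hga : g a = 0) (hg' : ∀ x ∈ Ioo a b, g' x ≠ 0)
    (hanti : StrictAntiOn (fun x => f' x / g' x) (Ioo a b)) :
    StrictAntiOn (fun x => f x / g x) (Ioo a b) := by
  rcases hasDerivWithinAt_forall_lt_or_forall_gt_of_forall_ne (convex_Ioo a b)
    (fun x hx => (hg x hx).hasDerivWithinAt) hg' with hneg | hpos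
  · exact strictAntiOn_div_of_hasDerivAt_of_neg hfc hgc hf hg hfa hga hneg hanti
  · simpa only [Pi.neg_apply, neg_div_neg_eq] using
      strictAntiOn_div_of_hasDerivAt_of_neg hfc.neg hgc.neg (fun x hx => (hf x hx).neg)
        (fun x hx => (hg x hx).neg) (by simp [hfa]) (by simp [hga])
        (fun x hx => neg_neg_of_pos (hpos x hx)) (by simpa only [neg_div_neg_eq] using hanti)

lemma mul_pi_sq_sub_sq_lt_mul_sin_of_le {t : ℝ} (h0 : 0 < t) (ht : t ≤ 7 / 5) :
    t * (π ^ 2 - t ^ 2) < (π ^ 2 + t ^ 2) * sin t := by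
  have hπ := pi_lt_d2
  have hexpand : (π ^ 2 + t ^ 2) * (t - t ^ 3 / 6) - t * (π ^ 2 - t ^ 2)
      = t ^ 3 * (12 - π ^ 2 - t ^ 2) / 6 := by ring
  have : 0 ≤ t ^ 3 * (12 - π ^ 2 - t ^ 2) / 6 := by
    have : π ^ 2 + t ^ 2 ≤ 12 := by nlinarith [pi_pos]
    exact div_nonneg (mul_nonneg (pow_pos h0 3).le (by linarith)) (by norm_num)
  calc t * (π ^ 2 - t ^ 2) ≤ (π ^ 2 + t ^ 2) * (t - t ^ 3 / 6) := by linarith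
    _ < (π ^ 2 + t ^ 2) * sin t := by gcongr; exact sin_gt_sub_cube h0

lemma mul_pi_sq_sub_sq_lt_mul_sin_of_ge {t : ℝ} (ht : 9 / 4 ≤ t) (htπ : t < π) :
    t * (π ^ 2 - t ^ 2) < (π ^ 2 + t ^ 2) * sin t := by
  obtain ⟨s, hs0, rfl⟩ : ∃ s, 0 < s ∧ t = π - s := ⟨π - t, by linarith, by ring⟩
  have hπ := pi_lt_d2
  have hexpand : (π ^ 2 + (π - s) ^ 2) * (s - s ^ 3 / 6) - (π - s) * (π ^ 2 - (π - s) ^ 2)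
      = s ^ 2 * (6 * π - s * ((π - s) ^ 2 + π ^ 2)) / 6 := by ring
  have : 0 ≤ s ^ 2 * (6 * π - s * ((π - s) ^ 2 + π ^ 2)) / 6 := by
    have h1 : (π - s) ^ 2 ≤ π ^ 2 := by nlinarith
    have h2 : π * s < 3 := by nlinarith
    exact div_nonneg (mul_nonneg (sq_nonneg s) (by nlinarith)) (by norm_num)
  calc (π - s) * (π ^ 2 - (π - s) ^ 2) ≤ (π ^ 2 + (π - s) ^ 2) * (s - s ^ 3 / 6) := by
        linarith
    _ < (π ^ 2 + (π - s) ^ 2) * sin (π - s) := by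
        rw [sin_pi_sub]; gcongr; exact sin_gt_sub_cube hs0

lemma mul_pi_sq_sub_sq_lt_mul_sin_of_mem_Icc {t : ℝ} (h1 : 7 / 5 ≤ t) (h2 : t ≤ 9 / 4) :
    t * (π ^ 2 - t ^ 2) < (π ^ 2 + t ^ 2) * sin t := by
  have hπ := pi_lt_d2
  have hπ' := pi_gt_d2
  calc t * (π ^ 2 - t ^ 2) < (π ^ 2 + t ^ 2) * (1 - (t - π / 2) ^ 2 / 2) := by
        nlinarith [mul_nonneg (sub_nonneg.2 h1) (sub_nonneg.2 h2),
          mul_pos (sub_pos.2 hπ) (sub_pos.2 hπ')]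
    _ ≤ (π ^ 2 + t ^ 2) * sin t := by
        rw [← cos_sub_pi_div_two]; gcongr; exact one_sub_sq_div_two_le_cos

theorem mul_pi_sq_sub_sq_lt_mul_sin {t : ℝ} (h0 : 0 < t) (htπ : t < π) :
    t * (π ^ 2 - t ^ 2) < (π ^ 2 + t ^ 2) * sin t := by
  rcases le_or_gt t (7 / 5) with hsmall | hsmall
  · exact mul_pi_sq_sub_sq_lt_mul_sin_of_le h0 hsmall
  rcases le_or_gt (9 / 4) t with hlarge | hlarge
  · exact mul_pi_sq_sub_sq_lt_mul_sin_of_ge hlarge htπ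
  · exact mul_pi_sq_sub_sq_lt_mul_sin_of_mem_Icc hsmall.le hlarge.le

lemma strictAntiOn_tan_mul_div :
    StrictAntiOn (fun x => tan x * (π ^ 2 - 4 * x ^ 2) / (8 * x)) (Ioo 0 (π / 2)) := by
  have hderiv : ∀ x ∈ Ioo 0 (π / 2), HasDerivAt (fun x => tan x * (π ^ 2 - 4 * x ^ 2) / (8 * x))
      ((x * (π ^ 2 - 4 * x ^ 2) - sin x * cos x * (π ^ 2 + 4 * x ^ 2)) /
        (8 * x ^ 2 * cos x ^ 2)) x := by
    rintro x ⟨hx0, hx⟩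
    have hc : cos x ≠ 0 := (cos_pos_of_mem_Ioo ⟨by linarith [pi_pos], hx⟩).ne'
    have h := ((hasDerivAt_tan hc).fun_mul
      (((hasDerivAt_pow 2 x).const_mul 4).const_sub (π ^ 2))).fun_div
      ((hasDerivAt_id' x).const_mul 8) (by positivity)
    refine h.congr_deriv ?_
    rw [tan_eq_sin_div_cos]
    field_simp
    ring
  refine strictAntiOn_of_hasDerivWithinAt_neg (convex_Ioo _ _)
    (fun x hx => (hderiv x hx).continuousAt.continuousWithinAt)
    (by simpa using fun x hx => (hderiv x hx).hasDerivWithinAt) ?_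
  rw [interior_Ioo]
  rintro x ⟨hx0, hx⟩
  have hc : 0 < cos x := cos_pos_of_mem_Ioo ⟨by linarith [pi_pos], hx⟩
  have := mul_pi_sq_sub_sq_lt_mul_sin (t := 2 * x) (by linarith) (by linarith)
  rw [sin_two_mul] at this
  exact div_neg_of_neg_of_pos (by nlinarith) (by positivity)

lemma hasDerivAt_log_cos {x : ℝ} (hx : cos x ≠ 0) :
    HasDerivAt (fun x => log (cos x)) (-tan x) x := by
  simpa [tan_eq_sin_div_cos, neg_div] using (hasDerivAt_cos x).log hx

lemma hasDerivAt_log_sq_sub_four_mul_sq_div_sq {c x : ℝ} (hc : c ≠ 0)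
    (hx : c ^ 2 - 4 * x ^ 2 ≠ 0) :
    HasDerivAt (fun x => log ((c ^ 2 - 4 * x ^ 2) / c ^ 2))
      (-(8 * x / (c ^ 2 - 4 * x ^ 2))) x := by
  convert ((((hasDerivAt_pow 2 x).const_mul 4).const_sub (c ^ 2)).div_const (c ^ 2)).log
    (div_ne_zero hx (pow_ne_zero 2 hc)) using 1
  field_simp
  ring

theorem stmt_10 :
    StrictAntiOn
      (fun x : ℝ => Real.log (Real.cos x) / Real.log ((π ^ 2 - 4 * x ^ 2) / π ^ 2))
      (Set.Ioo 0 (π / 2)) := by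
  have hf : ∀ x ∈ Ico 0 (π / 2), HasDerivAt (fun x => log (cos x)) (-tan x) x := fun x hx =>
    hasDerivAt_log_cos (cos_pos_of_mem_Ioo ⟨by linarith [pi_pos, hx.1], hx.2⟩).ne'
  have hquad : ∀ x ∈ Ico 0 (π / 2), 0 < π ^ 2 - 4 * x ^ 2 := fun x hx => by
    nlinarith [hx.1, hx.2]
  have hg : ∀ x ∈ Ico 0 (π / 2), HasDerivAt (fun x => log ((π ^ 2 - 4 * x ^ 2) / π ^ 2))
      (-(8 * x / (π ^ 2 - 4 * x ^ 2))) x := fun x hx =>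
    hasDerivAt_log_sq_sub_four_mul_sq_div_sq pi_ne_zero (hquad x hx).ne'
  refine strictAntiOn_div_of_hasDerivAt
    (fun x hx => (hf x hx).continuousAt.continuousWithinAt)
    (fun x hx => (hg x hx).continuousAt.continuousWithinAt)
    (fun x hx => hf x (Ioo_subset_Ico_self hx)) (fun x hx => hg x (Ioo_subset_Ico_self hx))
    (by simp) (by simp [pi_ne_zero]) (fun x hx => ?_) ?_
  · exact neg_ne_zero.2 (div_pos (by linarith [hx.1]) (hquad x (Ioo_subset_Ico_self hx))).ne'
  · simpa only [neg_div_neg_eq, div_div_eq_mul_div] using strictAntiOn_tan_mul_div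
end

section
/- For every real number r > 0, the function x ↦ log((sinh x)/x) / log(r²/(r² − x²)) is strictly decreasing on the open interval (0, r). -/
/-!
Both `f x = log (sinh x / x)` and `g x = log (r² / (r² - x²))` tend to `0` as `x → 0⁺`, so by the
monotone form of l'Hôpital's rule (two applications of Cauchy's mean value theorem) `f / g`
decreases as soon as `f' / g'` does. Here `f' = coth x - 1/x` is the Langevin function `L` and
`g' x = 2x / (r² - x²)`, so `f' / g' = (L x / x) · (r² - x²) / 2`. The derivative of `L x / x` is
`-h(2x) / (4 x³ sinh² x)` with `h t = t² + t sinh t + 4 - 4 cosh t`; `h` and its first three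
derivatives vanish at `0` while `h'''' t = t sinh t > 0`, so `h > 0` on `(0, ∞)`.
-/

open Real Set Filter Topology

theorem pos_of_tendsto_nhdsGT_of_hasDerivAt_pos {g g' : ℝ → ℝ} {a x : ℝ} (hax : a < x)
    (hg : ∀ t ∈ Ioc a x, HasDerivAt g (g' t) t) (hga : Tendsto g (𝓝[>] a) (𝓝 0))
    (hg' : ∀ t ∈ Ioo a x, 0 < g' t) : 0 < g x := by
  obtain ⟨e, he, he_eq⟩ := exists_ratio_hasDerivAt_eq_ratio_slope' g g' hax id (fun _ => 1)
    (fun t ht => hg t (Ioo_subset_Ioc_self ht)) (fun t _ => hasDerivAt_id t) hga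
    (tendsto_id.mono_left nhdsWithin_le_nhds)
    ((hg x (right_mem_Ioc.2 hax)).continuousAt.tendsto.mono_left nhdsWithin_le_nhds)
    (tendsto_id.mono_left nhdsWithin_le_nhds)
  simpa [he_eq] using mul_pos (sub_pos.2 hax) (hg' e he)

theorem strictAntiOn_div_of_strictAntiOn_deriv_div {f g f' g' : ℝ → ℝ} {a b : ℝ}
    (hf : ∀ x ∈ Ioo a b, HasDerivAt f (f' x) x) (hg : ∀ x ∈ Ioo a b, HasDerivAt g (g' x) x)
    (hfa : Tendsto f (𝓝[>] a) (𝓝 0)) (hga : Tendsto g (𝓝[>] a) (𝓝 0))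
    (hg' : ∀ x ∈ Ioo a b, 0 < g' x) (hanti : StrictAntiOn (fun x => f' x / g' x) (Ioo a b)) :
    StrictAntiOn (fun x => f x / g x) (Ioo a b) := by
  intro x hx y hy hxy
  have hsub : ∀ {s t}, a ≤ s → t ≤ y → Ioo s t ⊆ Ioo a b := fun hs ht =>
    Ioo_subset_Ioo hs (ht.trans hy.2.le)
  have hleft {φ φ' : ℝ → ℝ} (hφ : ∀ t ∈ Ioo a b, HasDerivAt φ (φ' t) t) :
      Tendsto φ (𝓝[<] x) (𝓝 (φ x)) :=
    (hφ x hx).continuousAt.tendsto.mono_left nhdsWithin_le_nhds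
  have hcont {φ φ' : ℝ → ℝ} (hφ : ∀ t ∈ Ioo a b, HasDerivAt φ (φ' t) t) :
      ContinuousOn φ (Icc x y) := fun t ht =>
    (hφ t ⟨hx.1.trans_le ht.1, ht.2.trans_lt hy.2⟩).continuousAt.continuousWithinAt
  have hg_pos : 0 < g x := pos_of_tendsto_nhdsGT_of_hasDerivAt_pos hx.1
    (fun t ht => hg t ⟨ht.1, ht.2.trans_lt hx.2⟩) hga
    (fun t ht => hg' t (hsub le_rfl hxy.le ht))
  have hg_lt : g x < g y := by
    obtain ⟨e, he, he_eq⟩ := exists_hasDerivAt_eq_slope g g' hxy (hcont hg)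
      (fun t ht => hg t (hsub hx.1.le le_rfl ht))
    have := hg' e (hsub hx.1.le le_rfl he)
    rw [he_eq] at this
    exact sub_pos.1 ((div_pos_iff_of_pos_right (sub_pos.2 hxy)).1 this)
  obtain ⟨c, hc, hc_eq⟩ := exists_ratio_hasDerivAt_eq_ratio_slope' f f' hx.1 g g'
    (fun t ht => hf t (hsub le_rfl hxy.le ht)) (fun t ht => hg t (hsub le_rfl hxy.le ht))
    hfa hga (hleft hf) (hleft hg)
  obtain ⟨d, hd, hd_eq⟩ := exists_ratio_hasDerivAt_eq_ratio_slope f f' hxy (hcont hf)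
    (fun t ht => hf t (hsub hx.1.le le_rfl ht)) g g' (hcont hg)
    (fun t ht => hg t (hsub hx.1.le le_rfl ht))
  have hc_mem : c ∈ Ioo a b := hsub le_rfl hxy.le hc
  have hd_mem : d ∈ Ioo a b := hsub hx.1.le le_rfl hd
  have hc_ratio : f' c / g' c = f x / g x := by
    rw [div_eq_div_iff (hg' c hc_mem).ne' hg_pos.ne']
    linarith
  have hd_ratio : f y - f x = f' d / g' d * (g y - g x) := by
    field_simp [(hg' d hd_mem).ne']
    linarith
  have hslope : f y - f x < f x / g x * (g y - g x) := by
    rw [hd_ratio, ← hc_ratio]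
    exact mul_lt_mul_of_pos_right (hanti hc_mem hd_mem (hc.2.trans hd.1)) (sub_pos.2 hg_lt)
  have hfx : f x / g x * g x = f x := div_mul_cancel₀ _ hg_pos.ne'
  show f y / g y < f x / g x
  rw [div_lt_iff₀ (hg_pos.trans hg_lt)]
  linarith

theorem lt_of_hasDerivAt_pos {f f' : ℝ → ℝ} {a x : ℝ} (hf : ∀ y, HasDerivAt f (f' y) y)
    (hf' : ∀ y, a < y → 0 < f' y) (hax : a < x) : f a < f x :=
  strictMonoOn_of_hasDerivWithinAt_pos (convex_Ici a)
    (fun y _ => (hf y).continuousAt.continuousWithinAt) (fun y _ => (hf y).hasDerivWithinAt)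
    (by simpa using hf') self_mem_Ici hax.le hax

namespace Real

variable {t : ℝ}

theorem sinh_lt_mul_cosh (ht : 0 < t) : sinh t < t * cosh t := by
  have hderiv (y : ℝ) : HasDerivAt (fun y => y * cosh y - sinh y) (y * sinh y) y :=
    (((hasDerivAt_id' y).mul (hasDerivAt_cosh y)).sub (hasDerivAt_sinh y)).congr_deriv (by ring)
  simpa using lt_of_hasDerivAt_pos hderiv (fun y hy => mul_pos hy (sinh_pos_iff.2 hy)) ht

theorem two_mul_cosh_lt (ht : 0 < t) : 2 * cosh t < t * sinh t + 2 := by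
  have hderiv (y : ℝ) :
      HasDerivAt (fun y => y * sinh y + 2 - 2 * cosh y) (y * cosh y - sinh y) y :=
    ((((hasDerivAt_id' y).mul (hasDerivAt_sinh y)).add_const 2).sub
      ((hasDerivAt_cosh y).const_mul 2)).congr_deriv (by ring)
  simpa using lt_of_hasDerivAt_pos hderiv (fun y hy => sub_pos.2 (sinh_lt_mul_cosh hy)) ht

theorem three_mul_sinh_lt (ht : 0 < t) : 3 * sinh t < 2 * t + t * cosh t := by
  have hderiv (y : ℝ) : HasDerivAt (fun y => 2 * y + y * cosh y - 3 * sinh y)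
      (y * sinh y + 2 - 2 * cosh y) y :=
    ((((hasDerivAt_id' y).const_mul 2).add ((hasDerivAt_id' y).mul (hasDerivAt_cosh y))).sub
      ((hasDerivAt_sinh y).const_mul 3)).congr_deriv (by ring)
  simpa using lt_of_hasDerivAt_pos hderiv (fun y hy => sub_pos.2 (two_mul_cosh_lt hy)) ht

theorem four_mul_cosh_lt (ht : 0 < t) : 4 * cosh t < t ^ 2 + t * sinh t + 4 := by
  have hderiv (y : ℝ) : HasDerivAt (fun y => y ^ 2 + y * sinh y + 4 - 4 * cosh y)
      (2 * y + y * cosh y - 3 * sinh y) y :=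
    (((((hasDerivAt_pow 2 y).add ((hasDerivAt_id' y).mul (hasDerivAt_sinh y))).add_const 4).sub
      ((hasDerivAt_cosh y).const_mul 4))).congr_deriv (by ring)
  simpa using lt_of_hasDerivAt_pos hderiv (fun y hy => sub_pos.2 (three_mul_sinh_lt hy)) ht

noncomputable def langevin (x : ℝ) : ℝ := cosh x / sinh x - x⁻¹

variable {x : ℝ}

theorem langevin_pos (hx : 0 < x) : 0 < langevin x := by
  have hs := sinh_pos_iff.2 hx
  rw [langevin, sub_pos, inv_eq_one_div, div_lt_div_iff₀ hx hs]
  linarith [sinh_lt_mul_cosh hx]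

theorem hasDerivAt_log_sinh_div (hx : 0 < x) :
    HasDerivAt (fun x => log (sinh x / x)) (langevin x) x := by
  have hs := sinh_pos_iff.2 hx
  refine (((hasDerivAt_sinh x).div (hasDerivAt_id' x) hx.ne').log
    (div_pos hs hx).ne').congr_deriv ?_
  simp only [langevin, Pi.div_apply]
  field_simp

theorem tendsto_log_sinh_div_nhdsGT_zero :
    Tendsto (fun x => log (sinh x / x)) (𝓝[>] 0) (𝓝 0) := by
  have h := (hasDerivAt_sinh 0).tendsto_slope_zero_right
  simp only [zero_add, sinh_zero, sub_zero, cosh_zero, smul_eq_mul] at h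
  simpa [div_eq_inv_mul, Function.comp_def] using ((continuousAt_log one_ne_zero).tendsto.comp h)

theorem hasDerivAt_langevin_div_self (hx : 0 < x) :
    HasDerivAt (fun x => langevin x / x)
      (-((2 * x) ^ 2 + 2 * x * sinh (2 * x) + 4 - 4 * cosh (2 * x)) / (4 * x ^ 3 * sinh x ^ 2))
      x := by
  have hs := sinh_pos_iff.2 hx
  refine ((((hasDerivAt_cosh x).div (hasDerivAt_sinh x) hs.ne').sub (hasDerivAt_inv hx.ne')).div
    (hasDerivAt_id' x) hx.ne').congr_deriv ?_
  simp only [Pi.sub_apply, Pi.div_apply]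
  rw [sinh_two_mul, cosh_two_mul]
  field_simp
  linear_combination (-4 * (1 + x ^ 2)) * cosh_sq x

theorem strictAntiOn_langevin_div_self : StrictAntiOn (fun x => langevin x / x) (Ioi 0) := by
  refine strictAntiOn_of_hasDerivWithinAt_neg (convex_Ioi 0)
    (fun x hx => (hasDerivAt_langevin_div_self hx).continuousAt.continuousWithinAt)
    (fun x hx => (hasDerivAt_langevin_div_self (interior_Ioi.subset hx)).hasDerivWithinAt)
    (fun x hx => ?_)
  rw [interior_Ioi, mem_Ioi] at hx
  have := four_mul_cosh_lt (mul_pos two_pos hx)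
  exact div_neg_of_neg_of_pos (by linarith)
    (mul_pos (by positivity) (pow_pos (sinh_pos_iff.2 hx) 2))

end Real

theorem hasDerivAt_log_sq_div_sq_sub {r x : ℝ} (hx : x ^ 2 < r ^ 2) :
    HasDerivAt (fun x => log (r ^ 2 / (r ^ 2 - x ^ 2))) (2 * x / (r ^ 2 - x ^ 2)) x := by
  have hden : 0 < r ^ 2 - x ^ 2 := sub_pos.2 hx
  have hr : 0 < r ^ 2 := (sq_nonneg x).trans_lt hx
  refine (((hasDerivAt_const x (r ^ 2)).div ((hasDerivAt_const x (r ^ 2)).sub (hasDerivAt_pow 2 x))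
    hden.ne').log (div_pos hr hden).ne').congr_deriv ?_
  have hr0 : r ≠ 0 := (pow_ne_zero_iff two_ne_zero).1 hr.ne'
  simp only [Pi.sub_apply, Pi.div_apply]
  field_simp
  ring

theorem tendsto_log_sq_div_sq_sub_nhdsGT_zero {r : ℝ} (hr : r ≠ 0) :
    Tendsto (fun x => log (r ^ 2 / (r ^ 2 - x ^ 2))) (𝓝[>] 0) (𝓝 0) := by
  have hcont : ContinuousAt (fun x => log (r ^ 2 / (r ^ 2 - x ^ 2))) 0 :=
    (continuousAt_const.div (by fun_prop) (by simp [hr])).log (by simp [hr])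
  simpa [hr] using hcont.tendsto.mono_left nhdsWithin_le_nhds

theorem strictAntiOn_langevin_div {r : ℝ} :
    StrictAntiOn (fun x => langevin x / (2 * x / (r ^ 2 - x ^ 2))) (Ioo 0 r) := by
  intro x hx y hy hxy
  have hsplit {t : ℝ} (ht : t ∈ Ioo 0 r) :
      langevin t / (2 * t / (r ^ 2 - t ^ 2)) = langevin t / t * ((r ^ 2 - t ^ 2) / 2) := by
    have : 0 < r ^ 2 - t ^ 2 := by nlinarith [ht.1, ht.2]
    field_simp
  simp only [hsplit hx, hsplit hy]
  calc langevin y / y * ((r ^ 2 - y ^ 2) / 2)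
      < langevin x / x * ((r ^ 2 - y ^ 2) / 2) :=
        mul_lt_mul_of_pos_right (strictAntiOn_langevin_div_self hx.1 hy.1 hxy)
          (by nlinarith [hy.1, hy.2])
    _ ≤ langevin x / x * ((r ^ 2 - x ^ 2) / 2) :=
        mul_le_mul_of_nonneg_left (by nlinarith [hx.1]) (div_pos (langevin_pos hx.1) hx.1).le

theorem stmt_11 (r : ℝ) (hr : 0 < r) :
    StrictAntiOn
      (fun x : ℝ => Real.log (Real.sinh x / x) / Real.log (r ^ 2 / (r ^ 2 - x ^ 2)))
      (Set.Ioo 0 r) := by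
  have hsq {x : ℝ} (hx : x ∈ Ioo 0 r) : x ^ 2 < r ^ 2 := pow_lt_pow_left₀ hx.2 hx.1.le two_ne_zero
  exact strictAntiOn_div_of_strictAntiOn_deriv_div (fun x hx => hasDerivAt_log_sinh_div hx.1)
    (fun x hx => hasDerivAt_log_sq_div_sq_sub (hsq hx)) tendsto_log_sinh_div_nhdsGT_zero
    (tendsto_log_sq_div_sq_sub_nhdsGT_zero hr.ne')
    (fun x hx => div_pos (mul_pos two_pos hx.1) (sub_pos.2 (hsq hx)))
    strictAntiOn_langevin_div
end

section
/- The limit of log((sin x)/x) / log((π² − x²)/π²) as x tends to 0 from the right equals π²/6, and the limit as x tends to π from the left equals 1. -/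
open Real Topology Filter Asymptotics

/-!
Near `0` each logarithm is asymptotic to its argument minus one, i.e. to
`sin x / x - 1 ~ -x² / 6` and to `-x² / π²`, so the ratio tends to `π² / 6`.
Near `π` the denominator tends to `-∞` while the difference of the two logarithms converges,
since `(sin x / x) / ((π² - x²) / π²) = π² sinc (π - x) / (x (π + x)) → 1 / 2`;
so the two logarithms are asymptotically equivalent and the ratio tends to `1`.
-/

theorem Asymptotics.isEquivalent_of_tendsto_sub {α β : Type*} [NormedAddCommGroup β]
    {l : Filter α} {u v : α → β} {c : β} (huv : Tendsto (u - v) l (𝓝 c))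
    (hv : Tendsto (fun x => ‖v x‖) l atTop) : u ~[l] v :=
  (huv.isBigO_one ℝ).trans_isLittleO ((isLittleO_one_left_iff ℝ).mpr hv)

namespace Real

theorem isEquivalent_log_sub_one : log ~[𝓝 1] fun y => y - 1 := by
  simpa using! (hasDerivAt_log one_ne_zero).isLittleO

theorem isEquivalent_sin_sub_self : (fun x => sin x - x) ~[𝓝 0] fun x => -(x ^ 3 / 6) := by
  have hquintic : (fun x => sin x - (x - x ^ 3 / 6)) =O[𝓝 0] fun x => x ^ 5 := by
    refine IsBigO.of_bound (1 / 100) ?_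
    filter_upwards [Metric.closedBall_mem_nhds (0 : ℝ) one_pos] with x hx
    have := sin_bound (by simpa using hx)
    simp only [norm_eq_abs, abs_pow]
    linarith
  have hcubic : (fun x : ℝ => x ^ 3) =O[𝓝 0] fun x => -(x ^ 3 / 6) :=
    IsBigO.of_bound 6 (.of_forall fun x => by rw [norm_neg, norm_div]; norm_num; linarith)
  refine IsLittleO.isEquivalent ((hquintic.trans_isLittleO
    ((isLittleO_pow_pow (by norm_num)).trans_isBigO hcubic)).congr_left fun x => ?_)
  simp only [Pi.sub_apply]
  ring

theorem isEquivalent_log_sin_div_self :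
    (fun x => log (sin x / x)) ~[𝓝[≠] 0] fun x => -(x ^ 2 / 6) := by
  have hx : ∀ᶠ x : ℝ in 𝓝[≠] 0, x ≠ 0 := self_mem_nhdsWithin
  have hsin : Tendsto (fun x => sin x / x) (𝓝[≠] 0) (𝓝 1) :=
    (isEquivalent_iff_tendsto_one hx).mp (isEquivalent_sin.mono nhdsWithin_le_nhds)
  have hquadratic : (fun x => sin x / x - 1) ~[𝓝[≠] 0] fun x => -(x ^ 2 / 6) := by
    refine (((isEquivalent_sin_sub_self.mono nhdsWithin_le_nhds).div
      (IsEquivalent.refl (u := id))).congr_left ?_).congr_right ?_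
    all_goals
      filter_upwards [hx] with x hx
      simp only [Pi.div_apply, id]
      field_simp
  exact (isEquivalent_log_sub_one.comp_tendsto hsin).trans hquadratic

theorem isEquivalent_log_sub_sq_div_sq {a : ℝ} (ha : a ≠ 0) :
    (fun x => log ((a ^ 2 - x ^ 2) / a ^ 2)) ~[𝓝 0] fun x => -(x ^ 2 / a ^ 2) := by
  have hcont : Continuous fun x : ℝ => (a ^ 2 - x ^ 2) / a ^ 2 := by fun_prop
  have hu : Tendsto (fun x => (a ^ 2 - x ^ 2) / a ^ 2) (𝓝 0) (𝓝 1) := by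
    simpa [ha] using hcont.tendsto 0
  refine (isEquivalent_log_sub_one.comp_tendsto hu).congr_right (.of_forall fun x => ?_)
  simp only [Function.comp_apply]
  field_simp
  ring

theorem tendsto_log_sub_sq_div_sq_nhdsLT {a : ℝ} (ha : 0 < a) :
    Tendsto (fun x => log ((a ^ 2 - x ^ 2) / a ^ 2)) (𝓝[<] a) atBot := by
  have hcont : Continuous fun x : ℝ => (a ^ 2 - x ^ 2) / a ^ 2 := by fun_prop
  refine tendsto_log_nhdsGT_zero.comp (tendsto_nhdsWithin_iff.mpr ⟨?_, ?_⟩)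
  · simpa using (hcont.tendsto a).mono_left nhdsWithin_le_nhds
  · filter_upwards [Ioo_mem_nhdsLT (neg_lt_self ha)] with x ⟨hxa, hxa'⟩
    exact Set.mem_Ioi.mpr (div_pos (by nlinarith) (by positivity))

theorem tendsto_log_sin_div_self_sub_log_nhdsLT_pi :
    Tendsto (fun x => log (sin x / x) - log ((π ^ 2 - x ^ 2) / π ^ 2)) (𝓝[<] π)
      (𝓝 (log (1 / 2))) := by
  have hcont : ContinuousAt (fun x => π ^ 2 * sinc (π - x) / (x * (π + x))) π := by
    fun_prop (disch := positivity)
  have hval : π ^ 2 * sinc (π - π) / (π * (π + π)) = 1 / 2 := by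
    rw [sub_self, sinc_zero]
    field_simp
    ring
  refine ((hval ▸ hcont.tendsto.mono_left nhdsWithin_le_nhds).log (by norm_num)).congr' ?_
  filter_upwards [Ioo_mem_nhdsLT pi_pos] with x ⟨hx0, hxπ⟩
  have hsin := sin_pos_of_pos_of_lt_pi hx0 hxπ
  have hsq : 0 < π ^ 2 - x ^ 2 := by nlinarith
  rw [← log_div (by positivity) (by positivity), sinc_of_ne_zero (by linarith), sin_pi_sub]
  congr 1
  field_simp
  ring

end Real

theorem stmt_14 :
    Tendsto (fun x : ℝ => Real.log (Real.sin x / x) / Real.log ((π ^ 2 - x ^ 2) / π ^ 2))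
        (𝓝[>] 0) (𝓝 (π ^ 2 / 6)) ∧
      Tendsto (fun x : ℝ => Real.log (Real.sin x / x) / Real.log ((π ^ 2 - x ^ 2) / π ^ 2))
        (𝓝[<] π) (𝓝 1) := by
  constructor
  · have hnum := isEquivalent_log_sin_div_self.mono (nhdsGT_le_nhdsNE 0)
    have hden :=
      (isEquivalent_log_sub_sq_div_sq pi_ne_zero).mono (nhdsWithin_le_nhds (s := Set.Ioi 0))
    refine (hnum.div hden).symm.tendsto_nhds (tendsto_const_nhds.congr' ?_)
    filter_upwards [self_mem_nhdsWithin] with x (hx : 0 < x)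
    simp only [Pi.div_apply]
    field_simp
  · have hden := tendsto_log_sub_sq_div_sq_nhdsLT pi_pos
    refine (isEquivalent_iff_tendsto_one (hden.eventually_ne_atBot 0)).mp ?_
    exact isEquivalent_of_tendsto_sub tendsto_log_sin_div_self_sub_log_nhdsLT_pi
      (tendsto_abs_atBot_atTop.comp hden)
end

section
/- The limit of log((tan x)/x) / log(π²/(π² − 4x²)) as x tends to 0 from the right equals π²/12, and the limit as x tends to π/2 from the left equals 1. -/
/-!
Near `0`, both logarithms are asymptotic to their arguments minus one (`log u ~ u - 1` as
`u → 1`), and `tan x / x - 1 ~ x² / 3` (L'Hôpital) while `π² / (π² - 4x²) - 1 ~ 4x² / π²`;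
the ratio tends to `(1/3) / (4/π²) = π²/12`.

Near `π / 2`, both logarithms are `-log (π / 2 - x) + O(1)`, because `cos x / (π / 2 - x)`
and `(π² - 4x²) / (π / 2 - x)` have positive finite limits; a common divergent main term
forces the ratio to `1`.
-/

open Real Topology Filter Asymptotics

namespace Asymptotics

variable {α β : Type*} [NormedAddCommGroup β] {l : Filter α}

theorem isEquivalent_of_tendsto_sub_s15 {f g : α → β} {c : β} (hg : Tendsto (‖g ·‖) l atTop)
    (hfg : Tendsto (fun x => f x - g x) l (𝓝 c)) : f ~[l] g :=
  (hfg.isBigO_one ℝ).trans_isLittleO ((isLittleO_one_left_iff ℝ).mpr hg)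

theorem tendsto_div_of_tendsto_sub {f g L : α → ℝ} {a b : ℝ} (hL : Tendsto L l atTop)
    (hf : Tendsto (fun x => f x - L x) l (𝓝 a)) (hg : Tendsto (fun x => g x - L x) l (𝓝 b)) :
    Tendsto (fun x => f x / g x) l (𝓝 1) := by
  have hL' : Tendsto (‖L ·‖) l atTop := tendsto_norm_atTop_atTop.comp hL
  have hfL := isEquivalent_of_tendsto_sub_s15 hL' hf
  have hgL := isEquivalent_of_tendsto_sub_s15 hL' hg
  have hg0 : ∀ᶠ x in l, g x ≠ 0 := (hgL.symm.tendsto_atTop hL).eventually_ne_atTop 0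
  exact (isEquivalent_iff_tendsto_one hg0).mp (hfL.trans hgL.symm)

end Asymptotics

theorem tendsto_const_sub_nhdsLT (a : ℝ) : Tendsto (fun x => a - x) (𝓝[<] a) (𝓝[>] 0) := by
  have h : ContinuousAt (fun x => a - x) a := by fun_prop
  refine tendsto_nhdsWithin_of_tendsto_nhds_of_eventually_within _
    (by simpa using h.tendsto.mono_left nhdsWithin_le_nhds) ?_
  exact eventually_nhdsWithin_of_forall fun x (hx : x < a) => sub_pos.mpr hx

namespace Real

theorem isEquivalent_log_nhds_one : log ~[𝓝 1] fun u => u - 1 := by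
  simpa using! (hasDerivAt_log one_ne_zero).isLittleO

theorem mul_sinc (x : ℝ) : x * sinc x = sin x := by
  rcases eq_or_ne x 0 with rfl | hx
  · simp
  · rw [sinc_of_ne_zero hx, mul_div_cancel₀ _ hx]

theorem tan_div_self_eq_sinc_div_cos {x : ℝ} (hx : x ≠ 0) : tan x / x = sinc x / cos x := by
  rw [tan_eq_sin_div_cos, sinc_of_ne_zero hx, div_right_comm]

theorem tendsto_tan_div_self : Tendsto (fun x => tan x / x) (𝓝[≠] 0) (𝓝 1) := by
  have h : ContinuousAt (fun x => sinc x / cos x) 0 := by fun_prop (disch := simp)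
  refine (h.tendsto.mono_left nhdsWithin_le_nhds).congr' ?_ |>.trans (by simp)
  filter_upwards [self_mem_nhdsWithin] with x hx
  exact (tan_div_self_eq_sinc_div_cos hx).symm

theorem tendsto_tan_sub_self_div_pow_three :
    Tendsto (fun x => (tan x - x) / x ^ 3) (𝓝[≠] 0) (𝓝 (1 / 3)) := by
  have hcos : ∀ᶠ x in 𝓝 (0 : ℝ), cos x ≠ 0 :=
    continuous_cos.continuousAt.eventually_ne (by simp)
  refine HasDerivAt.lhopital_zero_nhdsNE (f' := fun x => 1 / cos x ^ 2 - 1)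
    (g' := fun x => 3 * x ^ 2) ?_ ?_ ?_ ?_ ?_ ?_
  · filter_upwards [nhdsWithin_le_nhds hcos] with x hx
    exact (hasDerivAt_tan hx).sub (hasDerivAt_id x)
  · exact Eventually.of_forall fun x => by simpa using hasDerivAt_pow 3 x
  · filter_upwards [self_mem_nhdsWithin] with x hx
    exact mul_ne_zero three_ne_zero (pow_ne_zero 2 hx)
  · have h : ContinuousAt (fun x => tan x - x) 0 :=
      (continuousAt_tan.mpr (by simp)).sub continuousAt_id
    simpa using h.tendsto.mono_left nhdsWithin_le_nhds
  · have h : ContinuousAt (fun x : ℝ => x ^ 3) 0 := by fun_prop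
    simpa using h.tendsto.mono_left nhdsWithin_le_nhds
  · refine ((tendsto_tan_div_self.pow 2).div_const 3).congr' ?_ |>.trans (by norm_num)
    filter_upwards [self_mem_nhdsWithin, nhdsWithin_le_nhds hcos] with x (hx : x ≠ 0) hc
    rw [tan_eq_sin_div_cos]
    field_simp
    linear_combination sin_sq_add_cos_sq x

theorem tendsto_log_tan_div_self_div_log_nhdsNE_zero :
    Tendsto (fun x => log (tan x / x) / log (π ^ 2 / (π ^ 2 - 4 * x ^ 2)))
      (𝓝[≠] 0) (𝓝 (π ^ 2 / 12)) := by
  have hπ : π ^ 2 ≠ 0 := pow_ne_zero 2 pi_ne_zero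
  have hP : Tendsto (fun x => π ^ 2 / (π ^ 2 - 4 * x ^ 2)) (𝓝[≠] 0) (𝓝 1) := by
    have h : ContinuousAt (fun x => π ^ 2 / (π ^ 2 - 4 * x ^ 2)) 0 := by
      fun_prop (disch := simp [hπ])
    simpa [hπ] using h.tendsto.mono_left nhdsWithin_le_nhds
  have hratio : Tendsto (fun x => (tan x / x - 1) / (π ^ 2 / (π ^ 2 - 4 * x ^ 2) - 1))
      (𝓝[≠] 0) (𝓝 (π ^ 2 / 12)) := by
    have h : ContinuousAt (fun x => (π ^ 2 - 4 * x ^ 2) / 4) 0 := by fun_prop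
    rw [show π ^ 2 / 12 = 1 / 3 * ((π ^ 2 - 4 * 0 ^ 2) / 4) by ring]
    refine (tendsto_tan_sub_self_div_pow_three.mul
      (h.tendsto.mono_left nhdsWithin_le_nhds)).congr' ?_
    have hne : ∀ᶠ x in 𝓝 (0 : ℝ), π ^ 2 - 4 * x ^ 2 ≠ 0 :=
      ContinuousAt.eventually_ne (by fun_prop) (by simp [hπ])
    filter_upwards [self_mem_nhdsWithin, nhdsWithin_le_nhds hne] with x (hx : x ≠ 0) hx'
    rw [show π ^ 2 / (π ^ 2 - 4 * x ^ 2) - 1 = 4 * x ^ 2 / (π ^ 2 - 4 * x ^ 2) by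
      field_simp; ring]
    field_simp
  exact ((isEquivalent_log_nhds_one.comp_tendsto tendsto_tan_div_self).div
    (isEquivalent_log_nhds_one.comp_tendsto hP)).symm.tendsto_nhds hratio

theorem tendsto_log_tan_div_self_add_log_pi_div_two_sub :
    Tendsto (fun x => log (tan x / x) + log (π / 2 - x)) (𝓝[<] (π / 2)) (𝓝 (log (2 / π))) := by
  have h : ContinuousAt (fun x => log (sin x / (x * sinc (π / 2 - x)))) (π / 2) := by
    fun_prop (disch := simp [pi_ne_zero])
  convert (h.tendsto.mono_left nhdsWithin_le_nhds).congr' ?_ using 2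
  · simp
  filter_upwards [Ioo_mem_nhdsLT (by positivity : 0 < π / 2)] with x ⟨hx0, hx⟩
  have hcos : cos x = (π / 2 - x) * sinc (π / 2 - x) := by
    rw [mul_sinc, sin_pi_div_two_sub]
  have hsub : π / 2 - x ≠ 0 := (sub_pos.mpr hx).ne'
  have hsinc : sinc (π / 2 - x) ≠ 0 :=
    right_ne_zero_of_mul (hcos ▸ (cos_pos_of_mem_Ioo ⟨by linarith, hx⟩).ne')
  rw [← log_mul (div_pos (tan_pos_of_pos_of_lt_pi_div_two hx0 hx) hx0).ne' hsub,
    tan_eq_sin_div_cos, hcos]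
  generalize π / 2 - x = y at hsub hsinc ⊢
  congr 1
  field_simp

theorem tendsto_log_div_add_log_pi_div_two_sub :
    Tendsto (fun x => log (π ^ 2 / (π ^ 2 - 4 * x ^ 2)) + log (π / 2 - x)) (𝓝[<] (π / 2))
      (𝓝 (log (π / 4))) := by
  have h : ContinuousAt (fun x => log (π ^ 2 / (2 * (π + 2 * x)))) (π / 2) := by
    fun_prop (disch := positivity)
  convert (h.tendsto.mono_left nhdsWithin_le_nhds).congr' ?_ using 2
  · congr 1
    field_simp
    ring
  filter_upwards [Ioo_mem_nhdsLT (by positivity : 0 < π / 2)] with x ⟨hx0, hx⟩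
  have hsub : π / 2 - x ≠ 0 := (sub_pos.mpr hx).ne'
  rw [← log_mul (div_ne_zero (by positivity) (by nlinarith)) hsub,
    show π ^ 2 - 4 * x ^ 2 = 2 * (π + 2 * x) * (π / 2 - x) by ring, div_mul_eq_mul_div,
    mul_div_mul_right _ _ hsub]

theorem tendsto_log_tan_div_self_div_log_nhdsLT_pi_div_two :
    Tendsto (fun x => log (tan x / x) / log (π ^ 2 / (π ^ 2 - 4 * x ^ 2)))
      (𝓝[<] (π / 2)) (𝓝 1) := by
  have hL : Tendsto (fun x => -log (π / 2 - x)) (𝓝[<] (π / 2)) atTop :=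
    tendsto_neg_atBot_atTop.comp (tendsto_log_nhdsGT_zero.comp (tendsto_const_sub_nhdsLT _))
  exact tendsto_div_of_tendsto_sub hL
    (by simpa only [sub_neg_eq_add] using tendsto_log_tan_div_self_add_log_pi_div_two_sub)
    (by simpa only [sub_neg_eq_add] using tendsto_log_div_add_log_pi_div_two_sub)

end Real

theorem stmt_15 :
    Tendsto (fun x : ℝ => Real.log (Real.tan x / x) / Real.log (π ^ 2 / (π ^ 2 - 4 * x ^ 2)))
        (𝓝[>] 0) (𝓝 (π ^ 2 / 12)) ∧
      Tendsto (fun x : ℝ => Real.log (Real.tan x / x) / Real.log (π ^ 2 / (π ^ 2 - 4 * x ^ 2)))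
        (𝓝[<] (π / 2)) (𝓝 1) :=
  ⟨tendsto_log_tan_div_self_div_log_nhdsNE_zero.mono_left
      (nhdsWithin_mono _ fun _ hx => ne_of_gt hx),
    tendsto_log_tan_div_self_div_log_nhdsLT_pi_div_two⟩
end

section
/- The limit of log(cos x) / log((π² − 4x²)/π²) as x tends to 0 from the right equals π²/8. -/
open Real Topology Filter Asymptotics

/-! Near `1` the logarithm is equivalent to `y - 1`, so `log (cos x) ~ cos x - 1 ~ -x²/2` and
`log (1 - 4x²/π²) ~ -4x²/π²` as `x → 0`; the quotient of the two equivalents is `π²/8`. -/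

theorem Real.isEquivalent_log_nhds_one_s16 : log ~[𝓝 1] fun y => y - 1 :=
  IsLittleO.isEquivalent <| by
    simpa [Pi.sub_def] using (hasDerivAt_log one_ne_zero).isLittleO

theorem Real.cos_sub_one_eq_neg_two_mul_sin_sq (x : ℝ) : cos x - 1 = -2 * sin (x / 2) ^ 2 := by
  have h := cos_two_mul' (x / 2)
  rw [mul_div_cancel₀ x two_ne_zero] at h
  rw [h, cos_sq']
  ring

theorem Real.isEquivalent_cos_sub_one : (fun x => cos x - 1) ~[𝓝 0] fun x => -(x ^ 2 / 2) := by
  have hhalf : Tendsto (fun x : ℝ => x / 2) (𝓝 0) (𝓝 0) := by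
    simpa using (continuous_id.div_const (2 : ℝ)).tendsto 0
  have hsin : (fun x => sin (x / 2)) ~[𝓝 0] fun x => x / 2 := isEquivalent_sin.comp_tendsto hhalf
  convert (IsEquivalent.refl (u := fun _ : ℝ => (-2 : ℝ))).mul (hsin.pow 2) using 1 <;> ext x
  · simp only [Pi.mul_apply, Pi.pow_apply, cos_sub_one_eq_neg_two_mul_sin_sq]
  · simp only [Pi.mul_apply, Pi.pow_apply]
    ring

theorem Real.isEquivalent_log_of_tendsto_one {l : Filter ℝ} {f : ℝ → ℝ} (hf : Tendsto f l (𝓝 1)) :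
    (fun x => log (f x)) ~[l] fun x => f x - 1 :=
  isEquivalent_log_nhds_one_s16.comp_tendsto hf

theorem stmt_16 :
    Tendsto (fun x : ℝ => Real.log (Real.cos x) / Real.log ((π ^ 2 - 4 * x ^ 2) / π ^ 2))
      (𝓝[>] 0) (𝓝 (π ^ 2 / 8)) := by
  have hπ : π ^ 2 ≠ 0 := by positivity
  have hcos : (fun x => log (cos x)) ~[𝓝 0] fun x => -(x ^ 2 / 2) :=
    (isEquivalent_log_of_tendsto_one (by simpa using continuous_cos.tendsto 0)).trans
      isEquivalent_cos_sub_one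
  have hquad :
      (fun x => log ((π ^ 2 - 4 * x ^ 2) / π ^ 2)) ~[𝓝 0] fun x => -(4 * x ^ 2 / π ^ 2) := by
    refine (isEquivalent_log_of_tendsto_one ?_).congr_right (Eventually.of_forall fun x => ?_)
    · have : Continuous fun x : ℝ => (π ^ 2 - 4 * x ^ 2) / π ^ 2 := by fun_prop
      simpa [hπ] using this.tendsto 0
    · field_simp; ring
  have hratio := (hcos.div hquad).mono (nhdsWithin_le_nhds (s := Set.Ioi 0))
  refine hratio.symm.tendsto_nhds (tendsto_const_nhds.congr' ?_)
  filter_upwards [self_mem_nhdsWithin] with x (hx : 0 < x)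
  simp only [Pi.div_apply]
  field_simp
  ring
end
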